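/- arXiv:2504.18314 — 3 statements merged into one kernel-verified Lean document; each statement's English description precedes it below -/
import Mathlib

section
/- Let n ≥ 5. If H is an (n-2)-uniform hypergraph on n vertices with at least n edges, then H contains a Hamiltonian Berge cycle, unless H is isomorphic to K_{n-1}^{n-2} + e. -/
open Finset

/-- An `r`-uniform hypergraph: every edge has `r` vertices. -/
def Uniform {n : ℕ} (r : ℕ) (H : Finset (Finset (Fin n))) : Prop := ∀ e ∈ H, e.card = r

/-- Degree of a vertex: number of edges containing it. -/
def deg {n : ℕ} (H : Finset (Finset (Fin n))) (x : Fin n) : ℕ :=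
  (H.filter (fun A => x ∈ A)).card

/-- A Berge cycle of `H` spanning exactly the vertex set `S`: `|S|` distinct vertices
`v_0, …, v_{|S|-1}` covering `S` and `|S|` distinct edges `e_0, …, e_{|S|-1}` of `H`
with `v_i ∈ e_i ∩ e_{i+1}` cyclically. -/
def BergeCycleOn {n : ℕ} (H : Finset (Finset (Fin n))) (S : Finset (Fin n)) : Prop :=
  ∃ (v : ℕ → Fin n) (e : ℕ → Finset (Fin n)),
    Set.InjOn v (Set.Iio S.card) ∧ (∀ i < S.card, v i ∈ S) ∧
    (∀ x ∈ S, ∃ i < S.card, v i = x) ∧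
    Set.InjOn e (Set.Iio S.card) ∧ (∀ i < S.card, e i ∈ H) ∧
    (∀ i < S.card, v i ∈ e i ∧ v i ∈ e ((i + 1) % S.card))

/-- A Berge path of `H` spanning exactly `S`, from `a` to `b`: `|S|` distinct vertices
covering `S` and `|S| - 1` distinct edges with consecutive vertices in a common edge. -/
def BergePathOn {n : ℕ} (H : Finset (Finset (Fin n))) (S : Finset (Fin n)) (a b : Fin n) : Prop :=
  ∃ (v : ℕ → Fin n) (e : ℕ → Finset (Fin n)),
    v 0 = a ∧ v (S.card - 1) = b ∧
    Set.InjOn v (Set.Iio S.card) ∧ (∀ i < S.card, v i ∈ S) ∧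
    (∀ x ∈ S, ∃ i < S.card, v i = x) ∧
    Set.InjOn e (Set.Iio (S.card - 1)) ∧ (∀ i < S.card - 1, e i ∈ H) ∧
    (∀ i < S.card - 1, v i ∈ e i ∧ v (i + 1) ∈ e i)

/-- `H` contains a Hamiltonian Berge cycle. -/
def HamBergeCycle {n : ℕ} (H : Finset (Finset (Fin n))) : Prop :=
  BergeCycleOn H Finset.univ

/-- `H` contains a Hamiltonian Berge path. -/
def HamBergePath {n : ℕ} (H : Finset (Finset (Fin n))) : Prop :=
  ∃ a b, BergePathOn H Finset.univ a b

/-- `H` is Hamiltonian-connected on the vertex set `S`. -/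
def HamConnectedOn {n : ℕ} (H : Finset (Finset (Fin n))) (S : Finset (Fin n)) : Prop :=
  ∀ a ∈ S, ∀ b ∈ S, a ≠ b → BergePathOn H S a b

/-- `H` is (isomorphic to) `K_{n-1}^r + v`: all `r`-subsets avoiding one vertex `w`,
which is isolated. -/
def IsKPlusV {n : ℕ} (r : ℕ) (H : Finset (Finset (Fin n))) : Prop :=
  ∃ w : Fin n, H = (Finset.univ.erase w).powersetCard r

/-- `H` is (isomorphic to) `K_{n-1}^r + e`: all `r`-subsets avoiding one vertex `w`,
plus one extra edge `f` containing `w`. -/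
def IsKPlusE {n : ℕ} (r : ℕ) (H : Finset (Finset (Fin n))) : Prop :=
  ∃ (w : Fin n) (f : Finset (Fin n)), w ∈ f ∧ f.card = r ∧
    H = insert f ((Finset.univ.erase w).powersetCard r)

/-- Spectral radius of an `r`-uniform hypergraph: the supremum (attained maximum) of
`r · Σ_{A ∈ H} Π_{i ∈ A} x_i` over vectors of `ℓ_r`-norm one. -/
noncomputable def specRad {n : ℕ} (r : ℕ) (H : Finset (Finset (Fin n))) : ℝ :=
  sSup {y : ℝ | ∃ x : Fin n → ℝ, (∑ i, |x i| ^ r) = 1 ∧ y = r * ∑ A ∈ H, ∏ i ∈ A, x i}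

/-- The real polynomial `p_r(x) = x(x-1)⋯(x-r+1)/r!`, extending `C(x, r)`. -/
noncomputable def pr (r : ℕ) (x : ℝ) : ℝ :=
  (∏ i ∈ Finset.range r, (x - i)) / (Nat.factorial r)

/-- The inverse `p_r^{-1} : [0, ∞) → [r-1, ∞)` of `p_r` restricted to `[r-1, ∞)`. -/
noncomputable def prInv (r : ℕ) : ℝ → ℝ := Function.invFunOn (pr r) (Set.Ici ((r : ℝ) - 1))

namespace BergeAux
open Fin.NatCast Fin.CommRing


variable {n : ℕ}

lemma pair_eq_pair_iff {α : Type*} [DecidableEq α] {a b c d : α} :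
    ({a,b} : Finset α) = {c,d} ↔ (a = c ∧ b = d) ∨ (a = d ∧ b = c) := by
  constructor
  · intro h
    have ha : a ∈ ({c,d} : Finset α) := h ▸ (by simp)
    have hb : b ∈ ({c,d} : Finset α) := h ▸ (by simp)
    have hc : c ∈ ({a,b} : Finset α) := h ▸ (by simp)
    have hd : d ∈ ({a,b} : Finset α) := h ▸ (by simp)
    simp only [mem_insert, mem_singleton] at ha hb hc hd
    tauto
  · rintro (⟨rfl, rfl⟩ | ⟨rfl, rfl⟩)
    · rfl
    · exact Finset.pair_comm a b

/-- the cyclic edge of the order `σ` at position `i` -/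
def cedge [NeZero n] (σ : Fin n → Fin n) (i : Fin n) : Finset (Fin n) := {σ (i - 1), σ i}

variable [NeZero n]

lemma natCast_ne_zero' (hn : 5 ≤ n) {a : ℕ} (ha : 0 < a) (ha' : a < 5) :
    ((a : ℕ) : Fin n) ≠ 0 := by
  rw [Ne, Fin.natCast_eq_zero]
  intro h; have := Nat.le_of_dvd ha h; omega

lemma sub_one_ne_self (hn : 5 ≤ n) (i : Fin n) : i - 1 ≠ i := by
  intro h
  have h2 := sub_eq_self.mp h
  rw [show (1 : Fin n) = ((1:ℕ) : Fin n) by norm_cast] at h2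
  exact natCast_ne_zero' hn (by norm_num) (by norm_num) h2

lemma card_cedge (hn : 5 ≤ n) {σ : Fin n → Fin n} (hσ : Function.Injective σ) (i : Fin n) :
    (cedge σ i).card = 2 :=
  Finset.card_pair (fun h => sub_one_ne_self hn i (hσ h))

lemma mem_cedge (hn : 5 ≤ n) {σ : Fin n → Fin n} (hσ : Function.Injective σ) {i k : Fin n} :
    σ k ∈ cedge σ i ↔ i = k ∨ i = k + 1 := by
  unfold cedge
  simp only [mem_insert, mem_singleton]
  constructor
  · rintro (h | h)
    · right
      have hk : k = i - 1 := hσ h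
      rw [hk]; rw [sub_add_cancel]
    · left; exact (hσ h).symm
  · rintro (rfl | rfl)
    · right; rfl
    · left; congr 1; rw [add_sub_cancel_right]


lemma cast_ne_cast (hn : 5 ≤ n) {a b : ℕ} (ha : a < 5) (hb : b < 5) (hab : a ≠ b) :
    ((a : ℕ) : Fin n) ≠ ((b : ℕ) : Fin n) := by
  intro h
  rw [Fin.ext_iff, Fin.val_natCast, Fin.val_natCast, Nat.mod_eq_of_lt (by omega),
    Nat.mod_eq_of_lt (by omega)] at h
  exact hab h

lemma cedge_injective (hn : 5 ≤ n) {σ : Fin n → Fin n} (hσ : Function.Injective σ) :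
    Function.Injective (cedge σ) := by
  intro i j h
  unfold cedge at h
  rcases pair_eq_pair_iff.mp h with ⟨h1, h2⟩ | ⟨h1, h2⟩
  · exact hσ h2
  · -- σ (i-1) = σ j and σ i = σ (j-1)
    have e1 : i - 1 = j := hσ h1
    have e2 : i = j - 1 := hσ h2
    rw [e2] at e1
    -- j - 1 - 1 = j
    exfalso
    have : j - (((2:ℕ) : Fin n)) = j := by
      rw [show (((2:ℕ) : Fin n)) = 1 + 1 by norm_cast]
      rw [← sub_sub]; exact e1
    have h2' := sub_eq_self.mp this
    exact natCast_ne_zero' hn (by norm_num) (by norm_num) h2'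

/-- if two cyclic edges intersect, the indices are equal or cyclically adjacent -/
lemma adj_of_inter (hn : 5 ≤ n) {σ : Fin n → Fin n} (hσ : Function.Injective σ)
    (hbij : Function.Surjective σ) {i j : Fin n}
    (h : ¬ Disjoint (cedge σ i) (cedge σ j)) : i = j ∨ i = j + 1 ∨ j = i + 1 := by
  rw [Finset.not_disjoint_iff] at h
  obtain ⟨x, hxi, hxj⟩ := h
  obtain ⟨k, rfl⟩ := hbij x
  rw [mem_cedge hn hσ] at hxi hxj
  rcases hxi with rfl | rfl <;> rcases hxj with rfl | rfl <;> simp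

/-- among three distinct cyclic edges, two are disjoint -/
lemma two_disjoint_of_three (hn : 5 ≤ n) {σ : Fin n → Fin n} (hσ : Function.Injective σ)
    (hbij : Function.Surjective σ) {i j k : Fin n} (hij : i ≠ j) (hik : i ≠ k) (hjk : j ≠ k) :
    Disjoint (cedge σ i) (cedge σ j) ∨ Disjoint (cedge σ i) (cedge σ k) ∨
      Disjoint (cedge σ j) (cedge σ k) := by
  by_contra hcon
  push_neg at hcon
  obtain ⟨h1, h2, h3⟩ := hcon
  have a1 := adj_of_inter hn hσ hbij h1
  have a2 := adj_of_inter hn hσ hbij h2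
  have a3 := adj_of_inter hn hσ hbij h3
  have key : ∀ a : Fin n, a + ((3:ℕ) : Fin n) ≠ a := by
    intro a h
    exact natCast_ne_zero' hn (by norm_num) (by norm_num) (add_eq_left.mp h)
  have three : ((3:ℕ) : Fin n) = 1 + 1 + 1 := by push_cast; ring
  rcases a1 with rfl | h1 | h1
  · exact hij rfl
  all_goals rcases a2 with rfl | h2 | h2
  · exact hik rfl
  · -- i = j+1, i = k+1
    exact hjk (by rw [h1] at h2; exact add_right_cancel h2)
  · -- i = j+1, k = i+1
    rcases a3 with rfl | h3 | h3
    · exact hjk rfl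
    · -- j = k+1: chain j = ((j+1)+1)+1
      apply key j
      rw [three, ← add_assoc, ← add_assoc, ← h1, ← h2, ← h3]
    · -- k = j+1 and k = i+1 → i = j
      exact hij (by rw [h2] at h3; exact add_right_cancel h3)
  · exact hik rfl
  · -- j = i+1, i = k+1
    rcases a3 with rfl | h3 | h3
    · exact hjk rfl
    · -- j = k+1 and j = i+1 → k = i
      exact hik (by rw [h1] at h3; exact add_right_cancel h3)
    · -- k = j+1: chain k = ((k+1)+1)+1
      apply key k
      rw [three, ← add_assoc, ← add_assoc, ← h2, ← h1, ← h3]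
  · -- j = i+1, k = i+1 → j = k
    exact hjk (by rw [h1, h2])

/-- a fixed vertex lies in cyclic edges of at most two indices -/
lemma indices_subset (hn : 5 ≤ n) {σ : Fin n → Fin n} (hσ : Function.Injective σ)
    {x : Fin n} {k : Fin n} (hk : σ k = x) (s : Finset (Fin n)) (hs : ∀ i ∈ s, x ∈ cedge σ i) :
    s ⊆ {k, k + 1} := by
  intro i hi
  have := hs i hi
  rw [← hk, mem_cedge hn hσ] at this
  simp only [mem_insert, mem_singleton]
  exact this


section cross

variable {α : Type*} [DecidableEq α]

lemma pair_disjoint {a b c d : α} (h1 : a ≠ c) (h2 : a ≠ d) (h3 : b ≠ c) (h4 : b ≠ d) :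
    Disjoint ({a,b} : Finset α) ({c,d} : Finset α) := by
  simp only [Finset.disjoint_left, mem_insert, mem_singleton]
  rintro u (rfl | rfl) (h | h) <;> tauto

lemma eq_pair_of_mem {p : Finset α} (hp : p.card = 2) {u v : α} (hu : u ∈ p) (hv : v ∈ p)
    (huv : u ≠ v) : p = {u, v} := by
  refine (Finset.eq_of_subset_of_card_le ?_ ?_).symm
  · intro w hw
    simp only [mem_insert, mem_singleton] at hw
    rcases hw with rfl | rfl <;> assumption
  · rw [hp, Finset.card_pair huv]

lemma to_cross {x y z t : α} (hxy : x ≠ y) (hzt : z ≠ t)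
    (hxz : x ≠ z) (hxt : x ≠ t) (hyz : y ≠ z) (hyt : y ≠ t)
    {p : Finset α} (hp : p.card = 2) (h1 : ¬ Disjoint p ({x,y} : Finset α))
    (h2 : ¬ Disjoint p ({z,t} : Finset α)) :
    p = {x,z} ∨ p = {x,t} ∨ p = {y,z} ∨ p = {y,t} := by
  obtain ⟨u, hup, huc⟩ := Finset.not_disjoint_iff.mp h1
  obtain ⟨v, hvp, hvc⟩ := Finset.not_disjoint_iff.mp h2
  simp only [mem_insert, mem_singleton] at huc hvc
  have huv : u ≠ v := by rcases huc with rfl | rfl <;> rcases hvc with rfl | rfl <;> assumption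
  have hpuv : p = {u, v} := eq_pair_of_mem hp hup hvp huv
  rcases huc with rfl | rfl <;> rcases hvc with rfl | rfl <;> tauto

variable {x y z t : α} (hxy : x ≠ y) (hzt : z ≠ t)
    (hxz : x ≠ z) (hxt : x ≠ t) (hyz : y ≠ z) (hyt : y ≠ t)

include hxy hzt hxz hxt hyz hyt

lemma cross_couple {c3 : Finset α} (h3 : c3.card = 2)
    (h31 : c3 ≠ ({x,y} : Finset α)) (h32 : c3 ≠ ({z,t} : Finset α))
    (hm1 : ¬ Disjoint c3 ({x,z} : Finset α)) (hm2 : ¬ Disjoint c3 ({y,t} : Finset α)) :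
    c3 = {x,t} ∨ c3 = {y,z} := by
  obtain ⟨u, huc, hu⟩ := Finset.not_disjoint_iff.mp hm1
  obtain ⟨v, hvc, hv⟩ := Finset.not_disjoint_iff.mp hm2
  simp only [mem_insert, mem_singleton] at hu hv
  have huv : u ≠ v := by
    rcases hu with rfl | rfl <;> rcases hv with rfl | rfl
    exacts [hxy, hxt, hyz.symm, hzt]
  have h3uv : c3 = {u, v} := eq_pair_of_mem h3 huc hvc huv
  rcases hu with rfl | rfl <;> rcases hv with rfl | rfl
  · exact absurd h3uv h31
  · tauto
  · right; rw [h3uv]; exact Finset.pair_comm u v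
  · exact absurd h3uv h32

lemma card_meets_three_le (P : Finset (Finset α)) (hP : ∀ p ∈ P, p.card = 2)
    {c3 : Finset α} (h3 : c3.card = 2) (h31 : c3 ≠ ({x,y} : Finset α))
    (h32 : c3 ≠ ({z,t} : Finset α)) :
    (P.filter (fun p => ¬ Disjoint p ({x,y} : Finset α) ∧ ¬ Disjoint p ({z,t} : Finset α)
      ∧ ¬ Disjoint p c3)).card ≤ 3 := by
  classical
  set M := P.filter (fun p => ¬ Disjoint p ({x,y} : Finset α) ∧ ¬ Disjoint p ({z,t} : Finset α)
      ∧ ¬ Disjoint p c3) with hM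
  set CR4 : Finset (Finset α) := {{x,z},{x,t},{y,z},{y,t}} with hCR4
  have hsub : M ⊆ CR4 := by
    intro p hp
    rw [hM, mem_filter] at hp
    obtain ⟨hpP, h1, h2, _⟩ := hp
    have := to_cross hxy hzt hxz hxt hyz hyt (hP p hpP) h1 h2
    simp only [hCR4, mem_insert, mem_singleton]
    tauto
  by_contra hcon
  push_neg at hcon
  have hCRcard : CR4.card ≤ 4 := by
    refine le_trans (card_insert_le _ _) ?_
    have := card_insert_le ({x,t} : Finset α) ({{y,z},{y,t}} : Finset (Finset α))
    have := card_insert_le ({y,z} : Finset α) ({{y,t}} : Finset (Finset α))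
    simp only [card_singleton] at *
    omega
  have hEq : M = CR4 := Finset.eq_of_subset_of_card_le hsub (by omega)
  have hmem : ∀ q ∈ CR4, ¬ Disjoint q c3 := by
    intro q hq
    rw [← hEq, hM, mem_filter] at hq
    exact hq.2.2.2
  have hm1 : ¬ Disjoint c3 ({x,z} : Finset α) := by
    intro h; exact hmem {x,z} (by simp [hCR4]) h.symm
  have hm2 : ¬ Disjoint c3 ({y,t} : Finset α) := by
    intro h; exact hmem {y,t} (by simp [hCR4]) h.symm
  rcases cross_couple hxy hzt hxz hxt hyz hyt h3 h31 h32 hm1 hm2 with rfl | rfl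
  · exact hmem {y,z} (by simp [hCR4]) (pair_disjoint hxy.symm hyt hxz.symm hzt)
  · exact hmem {x,t} (by simp [hCR4]) (pair_disjoint hxy hxz hyt.symm hzt.symm)

lemma card_meets_four_le (P : Finset (Finset α)) (hP : ∀ p ∈ P, p.card = 2)
    {c3 c4 : Finset α} (h3 : c3.card = 2) (h4 : c4.card = 2)
    (h31 : c3 ≠ ({x,y} : Finset α)) (h32 : c3 ≠ ({z,t} : Finset α))
    (h41 : c4 ≠ ({x,y} : Finset α)) (h42 : c4 ≠ ({z,t} : Finset α)) (h34 : c3 ≠ c4) :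
    (P.filter (fun p => ¬ Disjoint p ({x,y} : Finset α) ∧ ¬ Disjoint p ({z,t} : Finset α)
      ∧ ¬ Disjoint p c3 ∧ ¬ Disjoint p c4)).card ≤ 2 := by
  classical
  set M := P.filter (fun p => ¬ Disjoint p ({x,y} : Finset α) ∧ ¬ Disjoint p ({z,t} : Finset α)
      ∧ ¬ Disjoint p c3 ∧ ¬ Disjoint p c4) with hM
  have hMprop : ∀ p ∈ M, ¬ Disjoint p ({x,y} : Finset α) ∧ ¬ Disjoint p ({z,t} : Finset α)
      ∧ ¬ Disjoint p c3 ∧ ¬ Disjoint p c4 := by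
    intro p hp; rw [hM, mem_filter] at hp; exact hp.2
  have hsub : ∀ p ∈ M, p = ({x,z} : Finset α) ∨ p = {x,t} ∨ p = {y,z} ∨ p = {y,t} := by
    intro p hp
    rw [hM, mem_filter] at hp
    exact to_cross hxy hzt hxz hxt hyz hyt (hP p hp.1) hp.2.1 hp.2.2.1
  by_contra hcon
  push_neg at hcon
  have hcard : 3 ≤ M.card := hcon
  clear hcon
  -- a complementary couple inside M
  have couple : (({x,z} : Finset α) ∈ M ∧ ({y,t} : Finset α) ∈ M) ∨
      (({x,t} : Finset α) ∈ M ∧ ({y,z} : Finset α) ∈ M) := by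
    by_cases hA : ({x,z} : Finset α) ∈ M ∧ ({y,t} : Finset α) ∈ M
    · exact Or.inl hA
    · right
      rw [not_and_or] at hA
      rcases hA with hA | hA
      · have hsub2 : M ⊆ ({{x,t},{y,z},{y,t}} : Finset (Finset α)) := by
          intro p hp
          simp only [mem_insert, mem_singleton]
          rcases hsub p hp with rfl | rfl | rfl | rfl
          · exact absurd hp hA
          · tauto
          · tauto
          · tauto
        have hc3' : (({{x,t},{y,z},{y,t}} : Finset (Finset α))).card ≤ 3 := by
          refine le_trans (card_insert_le _ _) ?_
          have := card_insert_le ({y,z} : Finset α) ({{y,t}} : Finset (Finset α))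
          simp only [card_singleton] at *
          omega
        have hEq : M = ({{x,t},{y,z},{y,t}} : Finset (Finset α)) :=
          Finset.eq_of_subset_of_card_le hsub2 (by omega)
        rw [hEq]
        constructor <;> simp
      · have hsub2 : M ⊆ ({{x,z},{x,t},{y,z}} : Finset (Finset α)) := by
          intro p hp
          simp only [mem_insert, mem_singleton]
          rcases hsub p hp with rfl | rfl | rfl | rfl
          · tauto
          · tauto
          · tauto
          · exact absurd hp hA
        have hc3' : (({{x,z},{x,t},{y,z}} : Finset (Finset α))).card ≤ 3 := by
          refine le_trans (card_insert_le _ _) ?_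
          have := card_insert_le ({x,t} : Finset α) ({{y,z}} : Finset (Finset α))
          simp only [card_singleton] at *
          omega
        have hEq : M = ({{x,z},{x,t},{y,z}} : Finset (Finset α)) :=
          Finset.eq_of_subset_of_card_le hsub2 (by omega)
        rw [hEq]
        constructor <;> simp
  have final : ∃ q1 q2 : Finset α, q1 ≠ q2 ∧ (∀ p ∈ M, p = q1 ∨ p = q2) := by
    rcases couple with ⟨hq1, hq2⟩ | ⟨hq1, hq2⟩
    · -- {x,z}, {y,t} ∈ M : c3, c4 are the two other diagonals
      have hm1 : ¬ Disjoint c3 ({x,z} : Finset α) := fun h => (hMprop _ hq1).2.2.1 h.symm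
      have hm2 : ¬ Disjoint c3 ({y,t} : Finset α) := fun h => (hMprop _ hq2).2.2.1 h.symm
      have hm1' : ¬ Disjoint c4 ({x,z} : Finset α) := fun h => (hMprop _ hq1).2.2.2 h.symm
      have hm2' : ¬ Disjoint c4 ({y,t} : Finset α) := fun h => (hMprop _ hq2).2.2.2 h.symm
      have hc3 := cross_couple hxy hzt hxz hxt hyz hyt h3 h31 h32 hm1 hm2
      have hc4 := cross_couple hxy hzt hxz hxt hyz hyt h4 h41 h42 hm1' hm2'
      have hboth : (∀ p ∈ M, ¬ Disjoint p ({x,t} : Finset α) ∧ ¬ Disjoint p ({y,z} : Finset α)) := by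
        intro p hp
        rcases hc3 with rfl | rfl <;> rcases hc4 with rfl | rfl
        · exact absurd rfl h34
        · exact ⟨(hMprop p hp).2.2.1, (hMprop p hp).2.2.2⟩
        · exact ⟨(hMprop p hp).2.2.2, (hMprop p hp).2.2.1⟩
        · exact absurd rfl h34
      refine ⟨{x,z}, {y,t}, ?_, ?_⟩
      · intro h
        have : x ∈ ({y,t} : Finset α) := h ▸ (by simp)
        simp only [mem_insert, mem_singleton] at this
        tauto
      · intro p hp
        rcases hsub p hp with rfl | rfl | rfl | rfl
        · tauto
        · exact absurd (pair_disjoint hxy hxz hyt.symm hzt.symm) (hboth _ hp).2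
        · exact absurd (pair_disjoint hxy.symm hyt hxz.symm hzt) (hboth _ hp).1
        · tauto
    · -- {x,t}, {y,z} ∈ M : use swapped version
      have hm1 : ¬ Disjoint c3 ({x,t} : Finset α) := fun h => (hMprop _ hq1).2.2.1 h.symm
      have hm2 : ¬ Disjoint c3 ({y,z} : Finset α) := fun h => (hMprop _ hq2).2.2.1 h.symm
      have hm1' : ¬ Disjoint c4 ({x,t} : Finset α) := fun h => (hMprop _ hq1).2.2.2 h.symm
      have hm2' : ¬ Disjoint c4 ({y,z} : Finset α) := fun h => (hMprop _ hq2).2.2.2 h.symm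
      have h32s : c3 ≠ ({t,z} : Finset α) := by rw [Finset.pair_comm t z]; exact h32
      have h42s : c4 ≠ ({t,z} : Finset α) := by rw [Finset.pair_comm t z]; exact h42
      have hc3 := cross_couple hxy hzt.symm hxt hxz hyt hyz h3 h31 h32s hm1 hm2
      have hc4 := cross_couple hxy hzt.symm hxt hxz hyt hyz h4 h41 h42s hm1' hm2'
      have hboth : (∀ p ∈ M, ¬ Disjoint p ({x,z} : Finset α) ∧ ¬ Disjoint p ({y,t} : Finset α)) := by
        intro p hp
        rcases hc3 with rfl | rfl <;> rcases hc4 with rfl | rfl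
        · exact absurd rfl h34
        · exact ⟨(hMprop p hp).2.2.1, (hMprop p hp).2.2.2⟩
        · exact ⟨(hMprop p hp).2.2.2, (hMprop p hp).2.2.1⟩
        · exact absurd rfl h34
      refine ⟨{x,t}, {y,z}, ?_, ?_⟩
      · intro h
        have : x ∈ ({y,z} : Finset α) := h ▸ (by simp)
        simp only [mem_insert, mem_singleton] at this
        tauto
      · intro p hp
        rcases hsub p hp with rfl | rfl | rfl | rfl
        · exact absurd (pair_disjoint hxy hxt hyz.symm hzt) (hboth _ hp).2
        · tauto
        · tauto
        · exact absurd (pair_disjoint hxy.symm hyz hxt.symm hzt.symm) (hboth _ hp).1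
  obtain ⟨q1, q2, hq12, hall⟩ := final
  have : M ⊆ ({q1, q2} : Finset (Finset α)) := by
    intro p hp
    simp only [mem_insert, mem_singleton]
    exact hall p hp
  have := card_le_card this
  have h2 : ({q1, q2} : Finset (Finset α)).card ≤ 2 := by
    refine le_trans (card_insert_le _ _) ?_
    simp
  omega

end cross




lemma natCast_inj_lt {i j : ℕ} (hi : i < n) (hj : j < n) (h : (i : Fin n) = (j : Fin n)) :
    i = j := by
  rw [Fin.ext_iff, Fin.val_natCast, Fin.val_natCast, Nat.mod_eq_of_lt hi, Nat.mod_eq_of_lt hj] at h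
  exact h

lemma natCast_mod (a : ℕ) : ((a % n : ℕ) : Fin n) = (a : Fin n) := by
  rw [Fin.ext_iff, Fin.val_natCast, Fin.val_natCast]
  exact Nat.mod_mod_of_dvd a (dvd_refl n)

lemma build_cycle (hn : 5 ≤ n) (H : Finset (Finset (Fin n)))
    (σ : Fin n → Fin n) (hσ : Function.Injective σ)
    (f : Fin n → Finset (Fin n)) (hf : Function.Injective f)
    (hfP : ∀ i, f i ∈ H.image (·ᶜ))
    (hdisj : ∀ i, Disjoint (f i) (cedge σ i)) : HamBergeCycle H := by
  have hsurj : Function.Surjective σ := Finite.surjective_of_injective hσ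
  refine ⟨fun i => σ ((i : ℕ) : Fin n), fun i => (f ((i : ℕ) : Fin n))ᶜ, ?_, ?_, ?_, ?_, ?_, ?_⟩ <;>
    simp only [Finset.card_univ, Fintype.card_fin]
  · intro i hi j hj h
    exact natCast_inj_lt hi hj (hσ h)
  · intro i _; exact mem_univ _
  · intro x _
    obtain ⟨k, hk⟩ := hsurj x
    exact ⟨k.val, k.isLt, by rw [Fin.cast_val_eq_self]; exact hk⟩
  · intro i hi j hj h
    simp only [compl_inj_iff] at h
    exact natCast_inj_lt hi hj (hf h)
  · intro i _
    obtain ⟨a, ha, hae⟩ := Finset.mem_image.mp (hfP ((i : ℕ) : Fin n))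
    rw [← hae, compl_compl]
    exact ha
  · intro i _
    constructor
    · have := hdisj ((i : ℕ) : Fin n)
      rw [Finset.mem_compl]
      intro hmem
      exact (Finset.disjoint_right.mp this (by simp [cedge])) hmem
    · have h2 := hdisj (((i : ℕ) : Fin n) + 1)
      rw [natCast_mod, Nat.cast_add, Nat.cast_one, Finset.mem_compl]
      intro hmem
      have : σ ((i : ℕ) : Fin n) ∈ cedge σ (((i : ℕ) : Fin n) + 1) := by
        simp [cedge, add_sub_cancel_right]
      exact (Finset.disjoint_right.mp h2 this) hmem


lemma pair_other {α : Type*} [DecidableEq α] {p : Finset α} (hp : p.card = 2) {u : α}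
    (hu : u ∈ p) : ∃ x, x ≠ u ∧ p = {u, x} := by
  obtain ⟨a, b, hab, rfl⟩ := Finset.card_eq_two.mp hp
  simp only [mem_insert, mem_singleton] at hu
  rcases hu with rfl | rfl
  · exact ⟨b, hab.symm, rfl⟩
  · exact ⟨a, hab, Finset.pair_comm a u⟩

lemma card4_le {β : Type*} [DecidableEq β] (a b c d : β) :
    ({a, b, c, d} : Finset β).card ≤ 4 := by
  refine le_trans (card_insert_le _ _) ?_
  have h1 := card_insert_le b ({c, d} : Finset β)
  have h2 := card_insert_le c ({d} : Finset β)
  simp only [card_singleton] at *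
  omega

lemma exists_four (hn : 5 ≤ n) (c c' : Finset (Fin n)) (hc : c.card = 2) (hc' : c'.card = 2)
    (hd : Disjoint c c') : ∃ x y z t : Fin n, x ≠ y ∧ z ≠ t ∧ x ≠ z ∧ x ≠ t ∧ y ≠ z ∧ y ≠ t
      ∧ c = {x, y} ∧ c' = {z, t} := by
  obtain ⟨x, y, hxy, rfl⟩ := Finset.card_eq_two.mp hc
  obtain ⟨z, t, hzt, rfl⟩ := Finset.card_eq_two.mp hc'
  refine ⟨x, y, z, t, hxy, hzt, ?_, ?_, ?_, ?_, rfl, rfl⟩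
  · rintro rfl
    exact Finset.disjoint_left.mp hd (mem_insert_self _ _) (mem_insert_self _ _)
  · rintro rfl
    exact Finset.disjoint_left.mp hd (mem_insert_self _ _)
      (mem_insert_of_mem (mem_singleton_self _))
  · rintro rfl
    exact Finset.disjoint_left.mp hd (mem_insert_of_mem (mem_singleton_self _))
      (mem_insert_self _ _)
  · rintro rfl
    exact Finset.disjoint_left.mp hd (mem_insert_of_mem (mem_singleton_self _))
      (mem_insert_of_mem (mem_singleton_self _))

lemma bound3 (hn : 5 ≤ n) {σ : Fin n → Fin n} (hσ : Function.Injective σ)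
    (P : Finset (Finset (Fin n))) (hP2 : ∀ p ∈ P, p.card = 2)
    {ia ib ic : Fin n} (hac : ia ≠ ic) (hbc : ib ≠ ic)
    (hd : Disjoint (cedge σ ia) (cedge σ ib)) :
    (P.filter (fun p => ¬ Disjoint p (cedge σ ia) ∧ ¬ Disjoint p (cedge σ ib)
      ∧ ¬ Disjoint p (cedge σ ic))).card ≤ 3 := by
  classical
  obtain ⟨x, y, z, t, hxy, hzt, hxz, hxt, hyz, hyt, hcex, hcey⟩ :=
    exists_four hn _ _ (card_cedge hn hσ ia) (card_cedge hn hσ ib) hd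
  rw [hcex, hcey]
  refine card_meets_three_le hxy hzt hxz hxt hyz hyt P hP2 (card_cedge hn hσ ic) ?_ ?_
  · rw [← hcex]; exact fun h => hac (cedge_injective hn hσ h).symm
  · rw [← hcey]; exact fun h => hbc (cedge_injective hn hσ h).symm

lemma bound4 (hn : 5 ≤ n) {σ : Fin n → Fin n} (hσ : Function.Injective σ)
    (P : Finset (Finset (Fin n))) (hP2 : ∀ p ∈ P, p.card = 2)
    {ia ib ic i4 : Fin n} (hac : ia ≠ ic) (hbc : ib ≠ ic) (had : ia ≠ i4) (hbd : ib ≠ i4)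
    (hcd : ic ≠ i4) (hd : Disjoint (cedge σ ia) (cedge σ ib)) :
    (P.filter (fun p => ¬ Disjoint p (cedge σ ia) ∧ ¬ Disjoint p (cedge σ ib)
      ∧ ¬ Disjoint p (cedge σ ic) ∧ ¬ Disjoint p (cedge σ i4))).card ≤ 2 := by
  classical
  obtain ⟨x, y, z, t, hxy, hzt, hxz, hxt, hyz, hyt, hcex, hcey⟩ :=
    exists_four hn _ _ (card_cedge hn hσ ia) (card_cedge hn hσ ib) hd
  rw [hcex, hcey]
  refine card_meets_four_le hxy hzt hxz hxt hyz hyt P hP2 (card_cedge hn hσ ic)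
    (card_cedge hn hσ i4) ?_ ?_ ?_ ?_ ?_
  · rw [← hcex]; exact fun h => hac (cedge_injective hn hσ h).symm
  · rw [← hcey]; exact fun h => hbc (cedge_injective hn hσ h).symm
  · rw [← hcex]; exact fun h => had (cedge_injective hn hσ h).symm
  · rw [← hcey]; exact fun h => hbd (cedge_injective hn hσ h).symm
  · exact fun h => hcd (cedge_injective hn hσ h)

lemma hallII (hn : 5 ≤ n) {σ : Fin n → Fin n} (hσ : Function.Injective σ)
    (P : Finset (Finset (Fin n))) (hP2 : ∀ p ∈ P, p.card = 2)
    (hm : n ≤ P.card) (hm6 : 6 ≤ P.card)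
    (hdeg : ∀ y : Fin n, (P.filter (fun p => y ∈ p)).card + 3 ≤ P.card)
    (hndom : ∀ i : Fin n, ∃ p ∈ P, Disjoint p (cedge σ i)) :
    ∀ s : Finset (Fin n),
      s.card ≤ (s.biUnion (fun i => P.filter (fun p => Disjoint p (cedge σ i)))).card := by
  classical
  have hsurj := Finite.surjective_of_injective hσ
  intro s
  set M := P.filter (fun p => ∀ i ∈ s, ¬ Disjoint p (cedge σ i)) with hMdef
  have hMsubP : M ⊆ P := filter_subset _ _
  have hMP := card_le_card hMsubP
  have hMprop : ∀ p ∈ M, ∀ i ∈ s, ¬ Disjoint p (cedge σ i) := by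
    intro p hp
    exact (mem_filter.mp hp).2
  have hunion : s.biUnion (fun i => P.filter (fun p => Disjoint p (cedge σ i))) = P \ M := by
    ext q
    simp only [mem_biUnion, mem_sdiff]
    constructor
    · rintro ⟨i, his, hq⟩
      rw [mem_filter] at hq
      refine ⟨hq.1, fun hqM => ?_⟩
      exact hMprop q hqM i his hq.2
    · rintro ⟨hqP, hqM⟩
      rw [hMdef, mem_filter] at hqM
      push_neg at hqM
      obtain ⟨i, his, hdq⟩ := hqM hqP
      exact ⟨i, his, mem_filter.mpr ⟨hqP, hdq⟩⟩
  rw [hunion, card_sdiff_of_subset hMsubP]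
  suffices h : s.card + M.card ≤ P.card by omega
  by_cases h5 : 5 ≤ s.card
  · -- M is empty
    have hM0 : M = ∅ := by
      by_contra hne
      obtain ⟨p, hp⟩ := Finset.nonempty_of_ne_empty hne
      have hpP := hMsubP hp
      obtain ⟨a, b, hab, hpab⟩ := Finset.card_eq_two.mp (hP2 p hpP)
      obtain ⟨ka, hka⟩ := hsurj a
      obtain ⟨kb, hkb⟩ := hsurj b
      have hs4 : s ⊆ {ka, ka + 1, kb, kb + 1} := by
        intro i his
        have hmeet := hMprop p hp i his
        obtain ⟨u, hup, huc⟩ := Finset.not_disjoint_iff.mp hmeet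
        rw [hpab] at hup
        simp only [mem_insert, mem_singleton] at hup ⊢
        rcases hup with rfl | rfl
        · rw [← hka, mem_cedge hn hσ] at huc; tauto
        · rw [← hkb, mem_cedge hn hσ] at huc; tauto
      have hle := le_trans (card_le_card hs4) (card4_le ka (ka + 1) kb (kb + 1))
      omega
    have hsn : s.card ≤ n := by simpa using card_le_univ s
    rw [hM0]
    simp only [card_empty]
    omega
  · push_neg at h5
    rcases Nat.lt_or_ge s.card 1 with h0 | h1
    · omega
    have hcases : s.card = 1 ∨ s.card = 2 ∨ s.card = 3 ∨ s.card = 4 := by omega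
    rcases hcases with h1c | h2c | h3c | h4c
    · -- one cycle edge : non-dominating
      obtain ⟨i, hsi⟩ := Finset.card_eq_one.mp h1c
      obtain ⟨p, hpP, hpd⟩ := hndom i
      have hpnM : p ∉ M := fun hpM => hMprop p hpM i (by rw [hsi]; simp) hpd
      have := Finset.card_lt_card (⟨hMsubP, fun hc => hpnM (hc hpP)⟩ : M ⊂ P)
      omega
    · -- two cycle edges
      obtain ⟨i, j, hij, hsij⟩ := Finset.card_eq_two.mp h2c
      have his : i ∈ s := by rw [hsij]; simp
      have hjs : j ∈ s := by rw [hsij]; simp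
      by_cases hd : Disjoint (cedge σ i) (cedge σ j)
      · obtain ⟨x, y, z, t, hxy, hzt, hxz, hxt, hyz, hyt, hcex, hcey⟩ :=
          exists_four hn _ _ (card_cedge hn hσ i) (card_cedge hn hσ j) hd
        have hMsub : M ⊆ {{x, z}, {x, t}, {y, z}, {y, t}} := by
          intro p hp
          have h1' := hMprop p hp i his
          have h2' := hMprop p hp j hjs
          rw [hcex] at h1'
          rw [hcey] at h2'
          have := to_cross hxy hzt hxz hxt hyz hyt (hP2 p (hMsubP hp)) h1' h2'
          simp only [mem_insert, mem_singleton]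
          tauto
        have := le_trans (card_le_card hMsub) (card4_le _ _ _ _)
        omega
      · obtain ⟨u, hui, huj⟩ := Finset.not_disjoint_iff.mp hd
        obtain ⟨x', hx'u, hxe⟩ := pair_other (card_cedge hn hσ i) hui
        obtain ⟨z', hz'u, hze⟩ := pair_other (card_cedge hn hσ j) huj
        have hxz' : x' ≠ z' := by
          rintro rfl
          apply hij
          apply cedge_injective hn hσ
          rw [hxe, hze]
        have hMsub : M ⊆ insert {x', z'} (P.filter (fun p => u ∈ p)) := by
          intro p hp
          have h1' := hMprop p hp i his
          have h2' := hMprop p hp j hjs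
          by_cases hu : u ∈ p
          · exact mem_insert_of_mem (mem_filter.mpr ⟨hMsubP hp, hu⟩)
          · obtain ⟨a1, ha1p, ha1c⟩ := Finset.not_disjoint_iff.mp h1'
            obtain ⟨a2, ha2p, ha2c⟩ := Finset.not_disjoint_iff.mp h2'
            rw [hxe] at ha1c
            rw [hze] at ha2c
            simp only [mem_insert, mem_singleton] at ha1c ha2c
            rcases ha1c with rfl | rfl
            · exact absurd ha1p hu
            · rcases ha2c with rfl | rfl
              · exact absurd ha2p hu
              · rw [mem_insert]
                exact Or.inl (eq_pair_of_mem (hP2 p (hMsubP hp)) ha1p ha2p hxz')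
        have hdegu := hdeg u
        have hins := card_insert_le ({x', z'} : Finset (Fin n))
          (P.filter (fun p => u ∈ p))
        have := card_le_card hMsub
        omega
    · -- three cycle edges
      obtain ⟨i, j, k, hij, hik, hjk, hsijk⟩ := Finset.card_eq_three.mp h3c
      have his : i ∈ s := by rw [hsijk]; simp
      have hjs : j ∈ s := by rw [hsijk]; simp
      have hks : k ∈ s := by rw [hsijk]; simp
      have hfin : M.card ≤ 3 := by
        rcases two_disjoint_of_three hn hσ hsurj hij hik hjk with hd | hd | hd
        · refine le_trans (card_le_card ?_) (bound3 hn hσ P hP2 hik hjk hd)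
          intro p hp
          exact mem_filter.mpr ⟨hMsubP hp,
            hMprop p hp i his, hMprop p hp j hjs, hMprop p hp k hks⟩
        · refine le_trans (card_le_card ?_) (bound3 hn hσ P hP2 hij hjk.symm hd)
          intro p hp
          exact mem_filter.mpr ⟨hMsubP hp,
            hMprop p hp i his, hMprop p hp k hks, hMprop p hp j hjs⟩
        · refine le_trans (card_le_card ?_) (bound3 hn hσ P hP2 hij.symm hik.symm hd)
          intro p hp
          exact mem_filter.mpr ⟨hMsubP hp,
            hMprop p hp j hjs, hMprop p hp k hks, hMprop p hp i his⟩
      omega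
    · -- four cycle edges
      have hpos : 0 < s.card := by omega
      obtain ⟨i1, hi1⟩ := Finset.card_pos.mp hpos
      have hcardE : (s.erase i1).card = 3 := by
        rw [Finset.card_erase_of_mem hi1, h4c]
      obtain ⟨j, k, l, hjk, hjl, hkl, hsE⟩ := Finset.card_eq_three.mp hcardE
      have hje : j ∈ s.erase i1 := by rw [hsE]; simp
      have hke : k ∈ s.erase i1 := by rw [hsE]; simp
      have hle : l ∈ s.erase i1 := by rw [hsE]; simp
      have hjs : j ∈ s := mem_of_mem_erase hje
      have hks : k ∈ s := mem_of_mem_erase hke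
      have hls : l ∈ s := mem_of_mem_erase hle
      have hji : j ≠ i1 := ne_of_mem_erase hje
      have hki : k ≠ i1 := ne_of_mem_erase hke
      have hli : l ≠ i1 := ne_of_mem_erase hle
      have hfin : M.card ≤ 2 := by
        rcases two_disjoint_of_three hn hσ hsurj hjk hjl hkl with hd | hd | hd
        · refine le_trans (card_le_card ?_) (bound4 hn hσ P hP2 hjl hkl hji hki hli hd)
          intro p hp
          exact mem_filter.mpr ⟨hMsubP hp, hMprop p hp j hjs, hMprop p hp k hks,
            hMprop p hp l hls, hMprop p hp i1 hi1⟩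
        · refine le_trans (card_le_card ?_) (bound4 hn hσ P hP2 hjk hkl.symm hji hli hki hd)
          intro p hp
          exact mem_filter.mpr ⟨hMsubP hp, hMprop p hp j hjs, hMprop p hp l hls,
            hMprop p hp k hks, hMprop p hp i1 hi1⟩
        · refine le_trans (card_le_card ?_) (bound4 hn hσ P hP2 hjk.symm hjl.symm hki hli hji hd)
          intro p hp
          exact mem_filter.mpr ⟨hMsubP hp, hMprop p hp k hks, hMprop p hp l hls,
            hMprop p hp j hjs, hMprop p hp i1 hi1⟩
      omega

section perm

variable {α : Type*} [DecidableEq α]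

lemma exists_perm2 {p0 p1 v0 v1 : α} (hp : p0 ≠ p1) (hv : v0 ≠ v1) :
    ∃ σ : α → α, Function.Injective σ ∧ σ p0 = v0 ∧ σ p1 = v1 := by
  classical
  let e1 := Equiv.swap p0 v0
  let e2 := e1.trans (Equiv.swap (e1 p1) v1)
  refine ⟨e2, e2.injective, ?_, ?_⟩
  · show Equiv.swap (e1 p1) v1 (e1 p0) = v0
    have h1 : e1 p0 = v0 := Equiv.swap_apply_left p0 v0
    rw [h1]
    apply Equiv.swap_apply_of_ne_of_ne
    · rw [← h1]; exact fun h => hp (e1.injective h.symm).symm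
    · exact hv
  · show Equiv.swap (e1 p1) v1 (e1 p1) = v1
    exact Equiv.swap_apply_left _ _

lemma exists_perm3 {p0 p1 p2 v0 v1 v2 : α} (hp01 : p0 ≠ p1) (hp02 : p0 ≠ p2) (hp12 : p1 ≠ p2)
    (hv01 : v0 ≠ v1) (hv02 : v0 ≠ v2) (hv12 : v1 ≠ v2) :
    ∃ σ : α → α, Function.Injective σ ∧ σ p0 = v0 ∧ σ p1 = v1 ∧ σ p2 = v2 := by
  classical
  obtain ⟨τ, hτ, h0, h1⟩ := exists_perm2 hp01 hv01
  let s := Equiv.swap (τ p2) v2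
  refine ⟨fun x => s (τ x), fun a b h => hτ (s.injective h), ?_, ?_, ?_⟩
  · show s (τ p0) = v0
    rw [h0]
    apply Equiv.swap_apply_of_ne_of_ne
    · rw [← h0]; exact fun h => hp02 (hτ h)
    · exact hv02
  · show s (τ p1) = v1
    rw [h1]
    apply Equiv.swap_apply_of_ne_of_ne
    · rw [← h1]; exact fun h => hp12 (hτ h)
    · exact hv12
  · exact Equiv.swap_apply_left _ _

lemma disjoint_pair_right {u v : α} {c : Finset α} (hu : u ∉ c) (hv : v ∉ c) :
    Disjoint c ({u, v} : Finset α) := by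
  rw [Finset.disjoint_right]
  intro a ha
  simp only [mem_insert, mem_singleton] at ha
  rcases ha with rfl | rfl <;> assumption

lemma inter_card_le_one {c c' : Finset α} (hc : c.card = 2) (hc' : c'.card = 2) (hne : c ≠ c') :
    (c ∩ c').card ≤ 1 := by
  by_contra hcon
  push_neg at hcon
  have hsub : c ∩ c' ⊆ c := inter_subset_left
  have h1 : c ∩ c' = c := Finset.eq_of_subset_of_card_le hsub (by omega)
  have hsub2 : c ⊆ c' := by rw [← h1]; exact inter_subset_right
  exact hne (Finset.eq_of_subset_of_card_le hsub2 (by omega))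

lemma pair_ne_left {a b c d : α} (h1 : a ≠ c) (h2 : a ≠ d) :
    ({a, b} : Finset α) ≠ ({c, d} : Finset α) := by
  intro h
  have : a ∈ ({c, d} : Finset α) := h ▸ mem_insert_self a {b}
  simp only [mem_insert, mem_singleton] at this
  tauto

lemma pair_ne_right {a b c d : α} (h1 : b ≠ c) (h2 : b ≠ d) :
    ({a, b} : Finset α) ≠ ({c, d} : Finset α) := by
  intro h
  have : b ∈ ({c, d} : Finset α) := h ▸ mem_insert_of_mem (mem_singleton_self b)
  simp only [mem_insert, mem_singleton] at this
  tauto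

end perm

/-- Case II : no vertex has degree ≥ |P| - 2.  Produces the cyclic data. -/
lemma caseII (hn : 5 ≤ n) (P : Finset (Finset (Fin n))) (hP2 : ∀ p ∈ P, p.card = 2)
    (hm : n ≤ P.card) (hm6 : 6 ≤ P.card)
    (hdeg : ∀ y : Fin n, (P.filter (fun p => y ∈ p)).card + 3 ≤ P.card) :
    ∃ σ : Fin n → Fin n, Function.Injective σ ∧ ∃ f : Fin n → Finset (Fin n),
      Function.Injective f ∧ ∀ i, f i ∈ P ∧ Disjoint (f i) (cedge σ i) := by
  classical
  -- a dominating pair is unique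
  have domdeg : ∀ a b : Fin n, (∀ p ∈ P, ¬ Disjoint p ({a, b} : Finset (Fin n))) →
      P.card ≤ (P.filter (fun p => a ∈ p)).card + (P.filter (fun p => b ∈ p)).card := by
    intro a b hdom
    have hsub : P ⊆ (P.filter (fun p => a ∈ p)) ∪ (P.filter (fun p => b ∈ p)) := by
      intro p hp
      obtain ⟨u, hup, huc⟩ := Finset.not_disjoint_iff.mp (hdom p hp)
      simp only [mem_insert, mem_singleton] at huc
      rw [mem_union, mem_filter, mem_filter]
      rcases huc with rfl | rfl
      · exact Or.inl ⟨hp, hup⟩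
      · exact Or.inr ⟨hp, hup⟩
    exact le_trans (card_le_card hsub) (card_union_le _ _)
  have huniq : ∀ a b a' b' : Fin n, a ≠ b → a' ≠ b' →
      (∀ p ∈ P, ¬ Disjoint p ({a, b} : Finset (Fin n))) →
      (∀ p ∈ P, ¬ Disjoint p ({a', b'} : Finset (Fin n))) →
      ({a, b} : Finset (Fin n)) = {a', b'} := by
    intro a b a' b' hab ha'b' hd1 hd2
    by_contra hne
    by_cases hdj : Disjoint ({a, b} : Finset (Fin n)) ({a', b'} : Finset (Fin n))
    · obtain ⟨x, y, z, t, hxy, hzt, hxz, hxt, hyz, hyt, hcex, hcey⟩ :=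
        exists_four hn _ _ (Finset.card_pair hab) (Finset.card_pair ha'b') hdj
      have hsub : P ⊆ {{x, z}, {x, t}, {y, z}, {y, t}} := by
        intro p hp
        have := to_cross hxy hzt hxz hxt hyz hyt (hP2 p hp)
          (hcex ▸ hd1 p hp) (hcey ▸ hd2 p hp)
        simp only [mem_insert, mem_singleton]
        tauto
      have := le_trans (card_le_card hsub) (card4_le _ _ _ _)
      omega
    · obtain ⟨u, hu1, hu2⟩ := Finset.not_disjoint_iff.mp hdj
      obtain ⟨x', hx'u, hxe⟩ := pair_other (Finset.card_pair hab) hu1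
      obtain ⟨z', hz'u, hze⟩ := pair_other (Finset.card_pair ha'b') hu2
      have hxz' : x' ≠ z' := by
        rintro rfl
        rw [hxe, hze] at hne
        exact hne rfl
      -- degree of x' is at most 2
      have hdx' : (P.filter (fun p => x' ∈ p)).card ≤ 2 := by
        have hsub : P.filter (fun p => x' ∈ p) ⊆ {{x', z'}, {u, x'}} := by
          intro p hp
          rw [mem_filter] at hp
          obtain ⟨hpP, hx'p⟩ := hp
          simp only [mem_insert, mem_singleton]
          by_cases hu : u ∈ p
          · right
            exact eq_pair_of_mem (hP2 p hpP) hu hx'p (fun h => hx'u h.symm)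
          · obtain ⟨a2, ha2p, ha2c⟩ := Finset.not_disjoint_iff.mp (hd2 p hpP)
            rw [hze] at ha2c
            simp only [mem_insert, mem_singleton] at ha2c
            rcases ha2c with rfl | rfl
            · exact absurd ha2p hu
            · left; exact eq_pair_of_mem (hP2 p hpP) hx'p ha2p hxz'
        refine le_trans (card_le_card hsub) ?_
        refine le_trans (card_insert_le _ _) ?_
        simp
      have h1 := domdeg u x' (by rw [← hxe]; exact hd1)
      have h2 := hdeg u
      omega
  -- find a suitable σ with no dominating cyclic edge
  have hsigma : ∃ σ : Fin n → Fin n, Function.Injective σ ∧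
      ∀ i, ∃ p ∈ P, Disjoint p (cedge σ i) := by
    by_cases hdom : ∃ a b : Fin n, a ≠ b ∧ ∀ p ∈ P, ¬ Disjoint p ({a, b} : Finset (Fin n))
    · obtain ⟨a, b, hab, hd⟩ := hdom
      have h02 : (0 : Fin n) ≠ (((2:ℕ)) : Fin n) := by
        have := cast_ne_cast (a := 0) (b := 2) hn (by norm_num) (by norm_num) (by norm_num)
        rwa [Nat.cast_zero] at this
      obtain ⟨σ, hσ, h0, h2⟩ := exists_perm2 h02 hab
      refine ⟨σ, hσ, fun i => ?_⟩
      by_contra hcon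
      push_neg at hcon
      obtain ⟨α, β, hαβ, hce⟩ := Finset.card_eq_two.mp (card_cedge hn hσ i)
      have hdom2 : ∀ p ∈ P, ¬ Disjoint p ({α, β} : Finset (Fin n)) := by
        intro p hp hdisj
        rw [← hce] at hdisj
        exact (hcon p hp) hdisj
      have heq := huniq α β a b hαβ hab hdom2 hd
      have hkey : cedge σ i = {σ 0, σ (((2:ℕ)) : Fin n)} := by
        rw [hce, heq, h0, h2]
      rcases pair_eq_pair_iff.mp hkey with ⟨e1, e2⟩ | ⟨e1, e2⟩
      · have hi2 : i = (((2:ℕ)) : Fin n) := hσ e2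
        have hi1 : i - 1 = 0 := hσ e1
        rw [sub_eq_iff_eq_add, zero_add] at hi1
        rw [hi1] at hi2
        have h1c : (1 : Fin n) = (((1:ℕ)) : Fin n) := by norm_cast
        rw [h1c] at hi2
        exact cast_ne_cast hn (by norm_num) (by norm_num) (by norm_num) hi2
      · have hi0 : i = 0 := hσ e2
        have hi1 : i - 1 = (((2:ℕ)) : Fin n) := hσ e1
        rw [hi0, sub_eq_iff_eq_add] at hi1
        have h3c : (((3:ℕ)) : Fin n) = (((2:ℕ)) : Fin n) + 1 := by
          rw [show (3:ℕ) = 2 + 1 by norm_num, Nat.cast_add, Nat.cast_one]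
        rw [← h3c] at hi1
        exact natCast_ne_zero' hn (by norm_num) (by norm_num) hi1.symm
    · push_neg at hdom
      refine ⟨id, Function.injective_id, fun i => ?_⟩
      obtain ⟨α, β, hαβ, hce⟩ := Finset.card_eq_two.mp (card_cedge hn Function.injective_id i)
      obtain ⟨p, hp, hpd⟩ := hdom α β hαβ
      exact ⟨p, hp, hce ▸ hpd⟩
  obtain ⟨σ, hσ, hndom⟩ := hsigma
  have hall := hallII hn hσ P hP2 hm hm6 hdeg hndom
  obtain ⟨f, hf, hfm⟩ := (Finset.all_card_le_biUnion_card_iff_exists_injective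
    (fun i => P.filter (fun p => Disjoint p (cedge σ i)))).mp hall
  refine ⟨σ, hσ, f, hf, fun i => ?_⟩
  have := hfm i
  rw [mem_filter] at this
  exact this

lemma disjoint_pair_left {α : Type*} [DecidableEq α] {u v : α} {c : Finset α}
    (hu : u ∉ c) (hv : v ∉ c) : Disjoint ({u, v} : Finset α) c :=
  (disjoint_pair_right hu hv).symm

lemma filter_w_eq (P : Finset (Finset (Fin n))) (hP2 : ∀ p ∈ P, p.card = 2) (w : Fin n) :
    P.filter (fun p => w ∈ p) =
      ((univ.erase w).filter (fun x => ({w, x} : Finset (Fin n)) ∈ P)).image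
        (fun x => ({w, x} : Finset (Fin n))) := by
  classical
  ext p
  simp only [mem_filter, mem_image, mem_erase, mem_univ, and_true]
  constructor
  · rintro ⟨hpP, hwp⟩
    obtain ⟨x, hxw, rfl⟩ := pair_other (hP2 p hpP) hwp
    exact ⟨x, ⟨⟨hxw, hpP⟩, rfl⟩⟩
  · rintro ⟨x, ⟨_, hP⟩, rfl⟩
    exact ⟨hP, mem_insert_self _ _⟩

lemma injOn_pair (w : Fin n) (X : Finset (Fin n)) (hX : ∀ x ∈ X, x ≠ w) :
    Set.InjOn (fun x => ({w, x} : Finset (Fin n))) X := by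
  intro x hx y hy h
  rcases pair_eq_pair_iff.mp h with ⟨_, h2⟩ | ⟨h1, _⟩
  · exact h2
  · exact absurd h1.symm (hX y hy)

/-- Case I constructive part -/
lemma caseI (hn : 5 ≤ n) (P : Finset (Finset (Fin n))) (hP2 : ∀ p ∈ P, p.card = 2)
    (hm : n ≤ P.card) {w : Fin n}
    (hw : P.card ≤ (P.filter (fun p => w ∈ p)).card + 2)
    (hQ : 2 ≤ (P.filter (fun p => w ∉ p)).card) :
    ∃ σ : Fin n → Fin n, Function.Injective σ ∧ ∃ f : Fin n → Finset (Fin n),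
      Function.Injective f ∧ ∀ i, f i ∈ P ∧ Disjoint (f i) (cedge σ i) := by
  classical
  set X := (univ.erase w).filter (fun x => ({w, x} : Finset (Fin n)) ∈ P) with hXdef
  have hXmem : ∀ x ∈ X, x ≠ w ∧ ({w, x} : Finset (Fin n)) ∈ P := by
    intro x hx
    rw [hXdef, mem_filter, mem_erase] at hx
    exact ⟨hx.1.1, hx.2⟩
  have hXne : ∀ x ∈ X, x ≠ w := fun x hx => (hXmem x hx).1
  have hXcard : (P.filter (fun p => w ∈ p)).card = X.card := by
    rw [filter_w_eq P hP2 w, Finset.card_image_of_injOn (injOn_pair w _ (by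
      intro x hx
      rw [mem_filter, mem_erase] at hx
      exact hx.1.1))]
  have hXn : n - 2 ≤ X.card := by omega
  -- two pairs avoiding w
  obtain ⟨p, hp, p', hp', hpp'⟩ := Finset.one_lt_card.mp (by omega : 1 < (P.filter (fun p => w ∉ p)).card)
  have hpP : p ∈ P := (mem_filter.mp hp).1
  have hwp : w ∉ p := (mem_filter.mp hp).2
  have hp'P : p' ∈ P := (mem_filter.mp hp').1
  have hwp' : w ∉ p' := (mem_filter.mp hp').2
  -- choose a ∉ p, a ≠ w
  have hcarda : 0 < (univ \ (insert w p)).card := by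
    rw [card_sdiff_of_subset (subset_univ _)]
    have h1 : (insert w p).card ≤ 3 := le_trans (card_insert_le _ _) (by rw [hP2 p hpP])
    have h2 : (univ : Finset (Fin n)).card = n := by simp
    omega
  obtain ⟨a, ha⟩ := Finset.card_pos.mp hcarda
  rw [mem_sdiff, mem_insert] at ha
  push_neg at ha
  obtain ⟨-, haw, hap⟩ := ha
  -- choose b ∉ p', b ≠ w, b ≠ a
  have hcardb : 0 < (univ \ (insert w (insert a p'))).card := by
    rw [card_sdiff_of_subset (subset_univ _)]
    have h1 : (insert w (insert a p')).card ≤ 4 := by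
      refine le_trans (card_insert_le _ _) ?_
      have := card_insert_le a p'
      rw [hP2 p' hp'P] at this
      omega
    have h2 : (univ : Finset (Fin n)).card = n := by simp
    omega
  obtain ⟨b, hb⟩ := Finset.card_pos.mp hcardb
  rw [mem_sdiff, mem_insert, mem_insert] at hb
  push_neg at hb
  obtain ⟨-, hbw, hba, hbp'⟩ := hb
  -- build σ with σ 0 = w, σ 1 = b, σ (0-1) = a
  have h1c : (1 : Fin n) = (((1:ℕ)) : Fin n) := by norm_cast
  have h01 : (0 : Fin n) ≠ 1 := by
    rw [h1c]
    intro h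
    exact natCast_ne_zero' hn (by norm_num) (by norm_num) h.symm
  have hq0 : (0 : Fin n) ≠ 0 - 1 := by
    intro h
    rw [eq_comm, sub_eq_iff_eq_add, zero_add] at h
    exact h01 h
  have hq1 : (1 : Fin n) ≠ 0 - 1 := by
    intro h
    rw [eq_comm, sub_eq_iff_eq_add] at h
    have h2c : (((2:ℕ)) : Fin n) = 1 + 1 := by
      rw [show (2:ℕ) = 1 + 1 by norm_num, Nat.cast_add, Nat.cast_one]
    rw [← h2c] at h
    exact natCast_ne_zero' hn (by norm_num) (by norm_num) h.symm
  obtain ⟨σ, hσ, hσ0, hσ1, hσq⟩ := exists_perm3 h01 hq0 hq1 hbw.symm haw.symm hba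
  -- Hall system on the other positions
  let ι := {i : Fin n // i ≠ 0 ∧ i ≠ 1}
  have hwnotc : ∀ i : Fin n, i ≠ 0 → i ≠ 1 → w ∉ cedge σ i := by
    intro i hi0 hi1 hmem
    rw [cedge, mem_insert, mem_singleton] at hmem
    rcases hmem with hmem | hmem
    · rw [← hσ0] at hmem
      have := hσ hmem.symm
      rw [sub_eq_iff_eq_add, zero_add] at this
      exact hi1 this
    · rw [← hσ0] at hmem
      exact hi0 (hσ hmem.symm)
  have hall2 : ∀ s : Finset ι,
      s.card ≤ (s.biUnion (fun i => X \ cedge σ i.1)).card := by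
    intro s
    set D := X.filter (fun x => ∀ i ∈ s, x ∈ cedge σ i.1) with hDdef
    have hDX : D ⊆ X := filter_subset _ _
    have hDle := card_le_card hDX
    have hDprop : ∀ x ∈ D, ∀ i ∈ s, x ∈ cedge σ i.1 := fun x hx => (mem_filter.mp hx).2
    have hunion : s.biUnion (fun i => X \ cedge σ i.1) = X \ D := by
      ext q
      simp only [mem_biUnion, mem_sdiff]
      constructor
      · rintro ⟨i, his, hq, hqc⟩
        exact ⟨hq, fun hqD => hqc (hDprop q hqD i his)⟩
      · rintro ⟨hqX, hqD⟩
        rw [hDdef, mem_filter] at hqD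
        push_neg at hqD
        obtain ⟨i, his, hic⟩ := hqD hqX
        exact ⟨i, his, hqX, hic⟩
    rw [hunion, card_sdiff_of_subset hDX]
    suffices h : s.card + D.card ≤ X.card by omega
    rcases Nat.lt_or_ge s.card 1 with h0 | h1
    · omega
    rcases Nat.lt_or_ge s.card 3 with h3 | h3
    · -- s.card = 1 or 2
      have hcases : s.card = 1 ∨ s.card = 2 := by omega
      rcases hcases with h1c' | h2c'
      · obtain ⟨i, hsi⟩ := Finset.card_eq_one.mp h1c'
        have hDsub : D ⊆ cedge σ i.1 := by
          intro x hx
          exact hDprop x hx i (by rw [hsi]; simp)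
        have := le_trans (card_le_card hDsub) (le_of_eq (card_cedge hn hσ i.1))
        omega
      · obtain ⟨i, j, hij, hsij⟩ := Finset.card_eq_two.mp h2c'
        have hDsub : D ⊆ cedge σ i.1 ∩ cedge σ j.1 := by
          intro x hx
          rw [mem_inter]
          exact ⟨hDprop x hx i (by rw [hsij]; simp), hDprop x hx j (by rw [hsij]; simp)⟩
        have hij' : i.1 ≠ j.1 := fun h => hij (Subtype.ext h)
        have hcl := inter_card_le_one (card_cedge hn hσ i.1) (card_cedge hn hσ j.1)
          (fun h => hij' (cedge_injective hn hσ h))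
        have := le_trans (card_le_card hDsub) hcl
        omega
    · -- s.card ≥ 3 : D is empty
      have hD0 : D = ∅ := by
        by_contra hne
        obtain ⟨x, hx⟩ := Finset.nonempty_of_ne_empty hne
        obtain ⟨s', hs's, hs'c⟩ := Finset.exists_subset_card_eq h3
        obtain ⟨i, j, k, hij, hik, hjk, hs'⟩ := Finset.card_eq_three.mp hs'c
        have hsurj := Finite.surjective_of_injective hσ
        obtain ⟨kx, hkx⟩ := hsurj x
        have hmemc : ∀ l : ι, l ∈ s → x ∈ cedge σ l.1 := fun l hl => hDprop x hx l hl
        have hi := hmemc i (hs's (by rw [hs']; simp))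
        have hj := hmemc j (hs's (by rw [hs']; simp))
        have hk := hmemc k (hs's (by rw [hs']; simp))
        rw [← hkx, mem_cedge hn hσ] at hi hj hk
        have hij' : i.1 ≠ j.1 := fun h => hij (Subtype.ext h)
        have hik' : i.1 ≠ k.1 := fun h => hik (Subtype.ext h)
        have hjk' : j.1 ≠ k.1 := fun h => hjk (Subtype.ext h)
        rcases hi with hi | hi <;> rcases hj with hj | hj <;> rcases hk with hk | hk
        · exact hij' (hi.trans hj.symm)
        · exact hij' (hi.trans hj.symm)
        · exact hik' (hi.trans hk.symm)
        · exact hjk' (hj.trans hk.symm)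
        · exact hjk' (hj.trans hk.symm)
        · exact hik' (hi.trans hk.symm)
        · exact hij' (hi.trans hj.symm)
        · exact hij' (hi.trans hj.symm)
      have hsX : s.card ≤ X.card := by
        have himg : s.card = (s.image (fun i : ι => i.1)).card :=
          (Finset.card_image_of_injective s Subtype.val_injective).symm
        have hsub : s.image (fun i : ι => i.1) ⊆ (univ.erase 0).erase 1 := by
          intro x hx
          rw [mem_image] at hx
          obtain ⟨i, _, rfl⟩ := hx
          rw [mem_erase, mem_erase]
          exact ⟨i.2.2, i.2.1, mem_univ _⟩
        have hcard2 : ((univ.erase (0 : Fin n)).erase 1).card = n - 2 := by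
          rw [Finset.card_erase_of_mem (by rw [mem_erase]; exact ⟨h01.symm, mem_univ _⟩),
            Finset.card_erase_of_mem (mem_univ _)]
          simp only [card_univ, Fintype.card_fin]
          omega
        have := card_le_card hsub
        omega
      rw [hD0]
      simpa using hsX
  obtain ⟨g, hg, hgm⟩ := (Finset.all_card_le_biUnion_card_iff_exists_injective
    (fun i : ι => X \ cedge σ i.1)).mp hall2
  have hgm' : ∀ i : ι, g i ∈ X ∧ g i ∉ cedge σ i.1 := by
    intro i
    have := hgm i
    rw [mem_sdiff] at this
    exact this
  -- assemble f
  set f : Fin n → Finset (Fin n) := fun i => if h0 : i = 0 then p else if h1 : i = 1 then p'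
    else {w, g ⟨i, ⟨h0, h1⟩⟩} with hfdef
  have hf0 : f 0 = p := by simp [hfdef]
  have hf1 : f 1 = p' := by
    simp [hfdef, h01.symm]
  have hfelse : ∀ (i : Fin n) (h0 : i ≠ 0) (h1 : i ≠ 1), f i = {w, g ⟨i, ⟨h0, h1⟩⟩} := by
    intro i h0 h1
    simp [hfdef, h0, h1]
  have hgw : ∀ i : ι, g i ≠ w := fun i => (hXmem _ (hgm' i).1).1
  refine ⟨σ, hσ, f, ?_, ?_⟩
  · intro i j h
    by_cases hi0 : i = 0
    · subst hi0
      rw [hf0] at h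
      by_cases hj0 : j = 0
      · rw [hj0]
      by_cases hj1 : j = 1
      · rw [hj1, hf1] at h
        exact absurd h hpp'
      · rw [hfelse j hj0 hj1] at h
        exact absurd (h ▸ mem_insert_self w _ : w ∈ p) hwp
    by_cases hi1 : i = 1
    · subst hi1
      rw [hf1] at h
      by_cases hj0 : j = 0
      · rw [hj0, hf0] at h
        exact absurd h.symm hpp'
      by_cases hj1 : j = 1
      · rw [hj1]
      · rw [hfelse j hj0 hj1] at h
        exact absurd (h ▸ mem_insert_self w _ : w ∈ p') hwp'
    rw [hfelse i hi0 hi1] at h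
    by_cases hj0 : j = 0
    · rw [hj0, hf0] at h
      exact absurd (h.symm ▸ mem_insert_self w _ : w ∈ p) hwp
    by_cases hj1 : j = 1
    · rw [hj1, hf1] at h
      exact absurd (h.symm ▸ mem_insert_self w _ : w ∈ p') hwp'
    rw [hfelse j hj0 hj1] at h
    rcases pair_eq_pair_iff.mp h with ⟨-, h2⟩ | ⟨h1', -⟩
    · have := hg h2
      exact congrArg Subtype.val this
    · exact absurd h1'.symm (hgw ⟨j, ⟨hj0, hj1⟩⟩)
  · intro i
    by_cases hi0 : i = 0
    · subst hi0
      rw [hf0]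
      refine ⟨hpP, ?_⟩
      have hce : cedge σ 0 = {a, w} := by
        rw [cedge, hσq, hσ0]
      rw [hce]
      exact disjoint_pair_right hap hwp
    by_cases hi1 : i = 1
    · subst hi1
      rw [hf1]
      refine ⟨hp'P, ?_⟩
      have hce : cedge σ 1 = {w, b} := by
        rw [cedge, sub_self, hσ0, hσ1]
      rw [hce]
      exact disjoint_pair_right hwp' hbp'
    rw [hfelse i hi0 hi1]
    refine ⟨(hXmem _ (hgm' ⟨i, ⟨hi0, hi1⟩⟩).1).2, ?_⟩
    exact disjoint_pair_left (hwnotc i hi0 hi1) (hgm' ⟨i, ⟨hi0, hi1⟩⟩).2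

/-- The exceptional configuration: few pairs avoiding `w` forces the star plus one pair. -/
lemma exceptional (hn : 5 ≤ n) (P : Finset (Finset (Fin n))) (hP2 : ∀ p ∈ P, p.card = 2)
    (hm : n ≤ P.card) {w : Fin n}
    (hQ : (P.filter (fun p => w ∉ p)).card ≤ 1) :
    ∃ pbar : Finset (Fin n), w ∉ pbar ∧ pbar.card = 2 ∧
      P = insert pbar ((univ.erase w).image (fun x => ({w, x} : Finset (Fin n)))) := by
  classical
  set X := (univ.erase w).filter (fun x => ({w, x} : Finset (Fin n)) ∈ P) with hXdef
  have hXcard : (P.filter (fun p => w ∈ p)).card = X.card := by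
    rw [filter_w_eq P hP2 w, Finset.card_image_of_injOn (injOn_pair w _ (by
      intro x hx
      rw [mem_filter, mem_erase] at hx
      exact hx.1.1))]
  have hXsub : X ⊆ univ.erase w := filter_subset _ _
  have herasecard : (univ.erase w).card = n - 1 := by
    rw [Finset.card_erase_of_mem (mem_univ _)]
    simp
  have hXle : X.card ≤ n - 1 := herasecard ▸ card_le_card hXsub
  have hsplit : (P.filter (fun p => w ∈ p)).card + (P.filter (fun p => w ∉ p)).card = P.card :=
    Finset.card_filter_add_card_filter_not _
  -- |Q| = 1 exactly and deg w = n - 1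
  have hQ1 : (P.filter (fun p => w ∉ p)).card = 1 := by omega
  have hXfull : X = univ.erase w := by
    apply Finset.eq_of_subset_of_card_le hXsub
    omega
  obtain ⟨pbar, hpbar⟩ := Finset.card_eq_one.mp hQ1
  have hpbarP : pbar ∈ P ∧ w ∉ pbar := by
    have : pbar ∈ P.filter (fun p => w ∉ p) := by rw [hpbar]; simp
    rw [mem_filter] at this
    exact this
  refine ⟨pbar, hpbarP.2, hP2 pbar hpbarP.1, ?_⟩
  apply Finset.Subset.antisymm
  · intro q hq
    by_cases hwq : w ∈ q
    · obtain ⟨x, hxw, rfl⟩ := pair_other (hP2 q hq) hwq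
      apply mem_insert_of_mem
      rw [mem_image]
      exact ⟨x, by rw [mem_erase]; exact ⟨hxw, mem_univ _⟩, rfl⟩
    · have : q ∈ P.filter (fun p => w ∉ p) := mem_filter.mpr ⟨hq, hwq⟩
      rw [hpbar, mem_singleton] at this
      rw [this]
      exact mem_insert_self _ _
  · intro q hq
    rw [mem_insert] at hq
    rcases hq with rfl | hq
    · exact hpbarP.1
    · rw [mem_image] at hq
      obtain ⟨x, hx, rfl⟩ := hq
      rw [← hXfull, hXdef, mem_filter] at hx
      exact hx.2

/-- handshake: sum of degrees equals twice the number of pairs -/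
lemma handshake (P : Finset (Finset (Fin n))) (hP2 : ∀ p ∈ P, p.card = 2) :
    ∑ x : Fin n, (P.filter (fun p => x ∈ p)).card = 2 * P.card := by
  classical
  have h1 : ∀ x : Fin n, (P.filter (fun p => x ∈ p)).card
      = ∑ p ∈ P, if x ∈ p then 1 else 0 := by
    intro x
    rw [Finset.card_filter]
  calc ∑ x : Fin n, (P.filter (fun p => x ∈ p)).card
      = ∑ x : Fin n, ∑ p ∈ P, if x ∈ p then 1 else 0 := by
        exact Finset.sum_congr rfl (fun x _ => h1 x)
    _ = ∑ p ∈ P, ∑ x : Fin n, if x ∈ p then 1 else 0 := Finset.sum_comm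
    _ = ∑ p ∈ P, p.card := by
        refine Finset.sum_congr rfl (fun p hp => ?_)
        rw [← Finset.card_filter]
        congr 1
        exact Finset.filter_univ_mem p
    _ = ∑ p ∈ P, 2 := Finset.sum_congr rfl (fun p hp => hP2 p hp)
    _ = 2 * P.card := by
        rw [Finset.sum_const, smul_eq_mul, mul_comm]

lemma mem_pair_left {α : Type*} [DecidableEq α] {a b : α} :
    a ∈ ({a, b} : Finset α) := mem_insert_self a _
lemma mem_pair_right {α : Type*} [DecidableEq α] {a b : α} :
    b ∈ ({a, b} : Finset α) := mem_insert_of_mem (mem_singleton_self b)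

lemma notmem_pair {α : Type*} [DecidableEq α] {a b c : α} (h1 : c ≠ a) (h2 : c ≠ b) :
    c ∉ ({a, b} : Finset α) := by
  simp only [mem_insert, mem_singleton]
  tauto

lemma ne_of_mem_notmem {α : Type*} {s t : Finset α} {x : α} (hx : x ∈ s) (hx' : x ∉ t) :
    s ≠ t := fun h => hx' (h ▸ hx)

lemma inj5 {β : Type*} {a b c d e : β} (h1 : a ≠ b) (h2 : a ≠ c) (h3 : a ≠ d) (h4 : a ≠ e)
    (h5 : b ≠ c) (h6 : b ≠ d) (h7 : b ≠ e) (h8 : c ≠ d) (h9 : c ≠ e) (h10 : d ≠ e) :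
    Function.Injective (![a, b, c, d, e] : Fin 5 → β) := by
  intro i j h
  fin_cases i <;> fin_cases j <;> simp_all

/-- the pentagon case : n = 5, all degrees 2, five pairs -/
lemma pentagon {n : ℕ} [NeZero n] (hn5 : n = 5) (P : Finset (Finset (Fin n)))
    (hP2 : ∀ p ∈ P, p.card = 2) (hm : P.card = 5)
    (hdeg2 : ∀ x : Fin n, (P.filter (fun p => x ∈ p)).card = 2) :
    ∃ σ : Fin n → Fin n, Function.Injective σ ∧ ∃ f : Fin n → Finset (Fin n),
      Function.Injective f ∧ ∀ i, f i ∈ P ∧ Disjoint (f i) (cedge σ i) := by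
  classical
  subst hn5
  have next : ∀ (x : Fin 5) (q : Finset (Fin 5)), q ∈ P → x ∈ q →
      ∃ (r : Finset (Fin 5)) (y : Fin 5), r ∈ P ∧ r ≠ q ∧ y ≠ x ∧ r = {x, y} := by
    intro x q hq hxq
    have h2 : 1 < (P.filter (fun p => x ∈ p)).card := by rw [hdeg2 x]; norm_num
    obtain ⟨r, hr, hrq⟩ := Finset.exists_mem_ne h2 q
    have hrP := (mem_filter.mp hr).1
    have hxr := (mem_filter.mp hr).2
    obtain ⟨y, hyx, hry⟩ := pair_other (hP2 r hrP) hxr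
    exact ⟨r, y, hrP, hrq, hyx, hry⟩
  -- start the chase
  have hP5 : P.Nonempty := by rw [← Finset.card_pos, hm]; norm_num
  obtain ⟨p0, hp0P⟩ := hP5
  obtain ⟨v0, v1, hv01, hp0e⟩ := Finset.card_eq_two.mp (hP2 p0 hp0P)
  obtain ⟨p1, v2, hp1P, hp1p0, hv21, hp1e⟩ := next v1 p0 hp0P (hp0e ▸ mem_pair_right)
  have hv20 : v2 ≠ v0 := by
    rintro rfl
    exact hp1p0 (by rw [hp1e, hp0e, Finset.pair_comm])
  obtain ⟨p2, v3, hp2P, hp2p1, hv32, hp2e⟩ := next v2 p1 hp1P (hp1e ▸ mem_pair_right)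
  have hv31 : v3 ≠ v1 := by
    rintro rfl
    exact hp2p1 (by rw [hp2e, hp1e, Finset.pair_comm])
  -- triangle refutation
  have hv30 : v3 ≠ v0 := by
    intro hv
    rw [hv] at hp2e
    have hp20 : p2 ≠ p0 :=
      ne_of_mem_notmem (hp2e ▸ mem_pair_left) (hp0e ▸ notmem_pair hv20 hv21)
    -- the two leftover vertices
    have hT : (univ \ ({v0, v1, v2} : Finset (Fin 5))).card = 2 := by
      rw [card_sdiff_of_subset (subset_univ _)]
      have h3 : ({v0, v1, v2} : Finset (Fin 5)).card = 3 := by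
        rw [card_insert_of_notMem (notmem_pair hv01 hv20.symm),
          Finset.card_pair hv21.symm]
      rw [h3, card_univ, Fintype.card_fin]
    obtain ⟨u, u', huu', hTe⟩ := Finset.card_eq_two.mp hT
    have huT : u ∈ univ \ ({v0, v1, v2} : Finset (Fin 5)) := hTe ▸ mem_pair_left
    have hu'T : u' ∈ univ \ ({v0, v1, v2} : Finset (Fin 5)) := hTe ▸ mem_pair_right
    rw [mem_sdiff] at huT hu'T
    simp only [mem_insert, mem_singleton, not_or] at huT hu'T
    obtain ⟨-, hu0, hu1, hu2⟩ := huT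
    obtain ⟨-, hu'0, hu'1, hu'2⟩ := hu'T
    have h3sub : ({p0, p1, p2} : Finset (Finset (Fin 5))) ⊆ P := by
      intro q hq
      simp only [mem_insert, mem_singleton] at hq
      rcases hq with rfl | rfl | rfl <;> assumption
    have h3card : ({p0, p1, p2} : Finset (Finset (Fin 5))).card = 3 := by
      rw [card_insert_of_notMem (notmem_pair hp1p0.symm hp20.symm),
        Finset.card_pair hp2p1.symm]
    have hRcard : (P \ ({p0, p1, p2} : Finset (Finset (Fin 5)))).card = 2 := by
      rw [card_sdiff_of_subset h3sub, h3card, hm]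
    have hfsub : ∀ z : Fin 5, z ≠ v0 → z ≠ v1 → z ≠ v2 →
        P.filter (fun p => z ∈ p) ⊆ P \ ({p0, p1, p2} : Finset (Finset (Fin 5))) := by
      intro z hz0 hz1 hz2 q hq
      rw [mem_filter] at hq
      rw [mem_sdiff]
      refine ⟨hq.1, ?_⟩
      simp only [mem_insert, mem_singleton, not_or]
      refine ⟨?_, ?_, ?_⟩
      · rintro rfl
        exact (hp0e ▸ notmem_pair hz0 hz1) hq.2
      · rintro rfl
        exact (hp1e ▸ notmem_pair hz1 hz2) hq.2
      · rintro rfl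
        exact (hp2e ▸ notmem_pair hz2 hz0) hq.2
    have hfu : P.filter (fun p => u ∈ p) = P \ ({p0, p1, p2} : Finset (Finset (Fin 5))) :=
      Finset.eq_of_subset_of_card_le (hfsub u hu0 hu1 hu2) (by rw [hRcard, hdeg2 u])
    have hfu' : P.filter (fun p => u' ∈ p) = P \ ({p0, p1, p2} : Finset (Finset (Fin 5))) :=
      Finset.eq_of_subset_of_card_le (hfsub u' hu'0 hu'1 hu'2) (by rw [hRcard, hdeg2 u'])
    obtain ⟨q1, q2, hq12, hRe⟩ := Finset.card_eq_two.mp hRcard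
    have hq1u : u ∈ q1 := by
      have : q1 ∈ P.filter (fun p => u ∈ p) := by rw [hfu, hRe]; exact mem_pair_left
      exact (mem_filter.mp this).2
    have hq1u' : u' ∈ q1 := by
      have : q1 ∈ P.filter (fun p => u' ∈ p) := by rw [hfu', hRe]; exact mem_pair_left
      exact (mem_filter.mp this).2
    have hq2u : u ∈ q2 := by
      have : q2 ∈ P.filter (fun p => u ∈ p) := by rw [hfu, hRe]; exact mem_pair_right
      exact (mem_filter.mp this).2
    have hq2u' : u' ∈ q2 := by
      have : q2 ∈ P.filter (fun p => u' ∈ p) := by rw [hfu', hRe]; exact mem_pair_right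
      exact (mem_filter.mp this).2
    have hq1P : q1 ∈ P := by
      have : q1 ∈ P \ ({p0, p1, p2} : Finset (Finset (Fin 5))) := hRe ▸ mem_pair_left
      exact (mem_sdiff.mp this).1
    have hq2P : q2 ∈ P := by
      have : q2 ∈ P \ ({p0, p1, p2} : Finset (Finset (Fin 5))) := hRe ▸ mem_pair_right
      exact (mem_sdiff.mp this).1
    have he1 : q1 = {u, u'} := eq_pair_of_mem (hP2 q1 hq1P) hq1u hq1u' huu'
    have he2 : q2 = {u, u'} := eq_pair_of_mem (hP2 q2 hq2P) hq2u hq2u' huu'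
    exact hq12 (he1.trans he2.symm)
  -- continue the chase
  obtain ⟨p3, v4, hp3P, hp3p2, hv43, hp3e⟩ := next v3 p2 hp2P (hp2e ▸ mem_pair_right)
  have hv42 : v4 ≠ v2 := by
    rintro rfl
    exact hp3p2 (by rw [hp3e, hp2e, Finset.pair_comm])
  have hv41 : v4 ≠ v1 := by
    intro hv
    rw [hv] at hp3e
    -- v1 would have degree ≥ 3
    have hsub : ({p0, p1, p3} : Finset (Finset (Fin 5))) ⊆ P.filter (fun p => v1 ∈ p) := by
      intro q hq
      simp only [mem_insert, mem_singleton] at hq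
      rcases hq with rfl | rfl | rfl
      · exact mem_filter.mpr ⟨hp0P, hp0e ▸ mem_pair_right⟩
      · exact mem_filter.mpr ⟨hp1P, hp1e ▸ mem_pair_left⟩
      · exact mem_filter.mpr ⟨hp3P, hp3e ▸ mem_pair_right⟩
    have hp30 : p3 ≠ p0 := ne_of_mem_notmem (hp3e ▸ mem_pair_left) (hp0e ▸ notmem_pair hv30 hv31)
    have hp31 : p3 ≠ p1 := ne_of_mem_notmem (hp3e ▸ mem_pair_left) (hp1e ▸ notmem_pair hv31 hv32)
    have hcard3 : ({p0, p1, p3} : Finset (Finset (Fin 5))).card = 3 := by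
      rw [card_insert_of_notMem (notmem_pair hp1p0.symm hp30.symm),
        Finset.card_pair hp31.symm]
    have := card_le_card hsub
    rw [hcard3, hdeg2 v1] at this
    omega
  have hv40 : v4 ≠ v0 := by
    intro hv
    rw [hv] at hp3e
    -- the fifth vertex has degree ≤ 1
    have hp30 : p3 ≠ p0 := ne_of_mem_notmem (hp3e ▸ mem_pair_left) (hp0e ▸ notmem_pair hv30 hv31)
    have hp31 : p3 ≠ p1 := ne_of_mem_notmem (hp3e ▸ mem_pair_left) (hp1e ▸ notmem_pair hv31 hv32)
    have hp20 : p2 ≠ p0 := ne_of_mem_notmem (hp2e ▸ mem_pair_right) (hp0e ▸ notmem_pair hv30 hv31)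
    have hT : 0 < (univ \ ({v0, v1, v2, v3} : Finset (Fin 5))).card := by
      rw [card_sdiff_of_subset (subset_univ _)]
      have h4 : ({v0, v1, v2, v3} : Finset (Fin 5)).card ≤ 4 := card4_le _ _ _ _
      rw [card_univ, Fintype.card_fin]
      omega
    obtain ⟨u, hu⟩ := Finset.card_pos.mp hT
    rw [mem_sdiff] at hu
    simp only [mem_insert, mem_singleton, not_or] at hu
    obtain ⟨-, hu0, hu1, hu2, hu3⟩ := hu
    have h4sub : ({p0, p1, p2, p3} : Finset (Finset (Fin 5))) ⊆ P := by
      intro q hq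
      simp only [mem_insert, mem_singleton] at hq
      rcases hq with rfl | rfl | rfl | rfl <;> assumption
    have h4card : ({p0, p1, p2, p3} : Finset (Finset (Fin 5))).card = 4 := by
      rw [card_insert_of_notMem, card_insert_of_notMem, Finset.card_pair hp3p2.symm]
      · exact notmem_pair hp2p1.symm hp31.symm
      · simp only [mem_insert, mem_singleton, not_or]
        exact ⟨hp1p0.symm, hp20.symm, hp30.symm⟩
    have hRcard : (P \ ({p0, p1, p2, p3} : Finset (Finset (Fin 5)))).card = 1 := by
      rw [card_sdiff_of_subset h4sub, h4card, hm]
    have hfsub : P.filter (fun p => u ∈ p) ⊆ P \ ({p0, p1, p2, p3} : Finset (Finset (Fin 5))) := by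
      intro q hq
      rw [mem_filter] at hq
      rw [mem_sdiff]
      refine ⟨hq.1, ?_⟩
      simp only [mem_insert, mem_singleton, not_or]
      refine ⟨?_, ?_, ?_, ?_⟩
      · rintro rfl; exact (hp0e ▸ notmem_pair hu0 hu1) hq.2
      · rintro rfl; exact (hp1e ▸ notmem_pair hu1 hu2) hq.2
      · rintro rfl; exact (hp2e ▸ notmem_pair hu2 hu3) hq.2
      · rintro rfl; exact (hp3e ▸ notmem_pair hu3 hu0) hq.2
    have := card_le_card hfsub
    rw [hRcard, hdeg2 u] at this
    omega
  -- last step of the chase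
  obtain ⟨p4, x5, hp4P, hp4p3, hx54, hp4e⟩ := next v4 p3 hp3P (hp3e ▸ mem_pair_right)
  have hp40 : p4 ≠ p0 := ne_of_mem_notmem (hp4e ▸ mem_pair_left) (hp0e ▸ notmem_pair hv40 hv41)
  have hp41 : p4 ≠ p1 := ne_of_mem_notmem (hp4e ▸ mem_pair_left) (hp1e ▸ notmem_pair hv41 hv42)
  have hp42 : p4 ≠ p2 := ne_of_mem_notmem (hp4e ▸ mem_pair_left) (hp2e ▸ notmem_pair hv42 hv43)
  have hx53 : x5 ≠ v3 := by
    intro hv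
    rw [hv] at hp4e
    exact hp4p3 (by rw [hp4e, hp3e, Finset.pair_comm])
  have hx51 : x5 ≠ v1 := by
    intro hv
    rw [hv] at hp4e
    have hsub : ({p0, p1, p4} : Finset (Finset (Fin 5))) ⊆ P.filter (fun p => v1 ∈ p) := by
      intro q hq
      simp only [mem_insert, mem_singleton] at hq
      rcases hq with rfl | rfl | rfl
      · exact mem_filter.mpr ⟨hp0P, hp0e ▸ mem_pair_right⟩
      · exact mem_filter.mpr ⟨hp1P, hp1e ▸ mem_pair_left⟩
      · exact mem_filter.mpr ⟨hp4P, hp4e ▸ mem_pair_right⟩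
    have hcard3 : ({p0, p1, p4} : Finset (Finset (Fin 5))).card = 3 := by
      rw [card_insert_of_notMem (notmem_pair hp1p0.symm hp40.symm),
        Finset.card_pair hp41.symm]
    have := card_le_card hsub
    rw [hcard3, hdeg2 v1] at this
    omega
  have hx52 : x5 ≠ v2 := by
    intro hv
    rw [hv] at hp4e
    have hsub : ({p1, p2, p4} : Finset (Finset (Fin 5))) ⊆ P.filter (fun p => v2 ∈ p) := by
      intro q hq
      simp only [mem_insert, mem_singleton] at hq
      rcases hq with rfl | rfl | rfl
      · exact mem_filter.mpr ⟨hp1P, hp1e ▸ mem_pair_right⟩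
      · exact mem_filter.mpr ⟨hp2P, hp2e ▸ mem_pair_left⟩
      · exact mem_filter.mpr ⟨hp4P, hp4e ▸ mem_pair_right⟩
    have hcard3 : ({p1, p2, p4} : Finset (Finset (Fin 5))).card = 3 := by
      rw [card_insert_of_notMem (notmem_pair hp2p1.symm hp41.symm),
        Finset.card_pair hp42.symm]
    have := card_le_card hsub
    rw [hcard3, hdeg2 v2] at this
    omega
  have hx50 : x5 = v0 := by
    have huniv : (univ : Finset (Fin 5)) = {v0, v1, v2, v3, v4} := by
      symm
      apply Finset.eq_of_subset_of_card_le (subset_univ _)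
      have : ({v0, v1, v2, v3, v4} : Finset (Fin 5)).card = 5 := by
        rw [card_insert_of_notMem, card_insert_of_notMem, card_insert_of_notMem,
          Finset.card_pair hv43.symm]
        · exact notmem_pair hv32.symm hv42.symm
        · simp only [mem_insert, mem_singleton, not_or]
          exact ⟨hv21.symm, hv31.symm, hv41.symm⟩
        · simp only [mem_insert, mem_singleton, not_or]
          exact ⟨hv01, hv20.symm, hv30.symm, hv40.symm⟩
      rw [card_univ, Fintype.card_fin, this]
    have : x5 ∈ ({v0, v1, v2, v3, v4} : Finset (Fin 5)) := huniv ▸ mem_univ x5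
    simp only [mem_insert, mem_singleton] at this
    rcases this with h | h | h | h | h
    · exact h
    · exact absurd h hx51
    · exact absurd h hx52
    · exact absurd h hx53
    · exact absurd h hx54
  rw [hx50] at hp4e
  -- now build the explicit cycle
  have hp20 : p2 ≠ p0 := ne_of_mem_notmem (hp2e ▸ mem_pair_right) (hp0e ▸ notmem_pair hv30 hv31)
  have hp30 : p3 ≠ p0 := ne_of_mem_notmem (hp3e ▸ mem_pair_left) (hp0e ▸ notmem_pair hv30 hv31)
  have hp31 : p3 ≠ p1 := ne_of_mem_notmem (hp3e ▸ mem_pair_left) (hp1e ▸ notmem_pair hv31 hv32)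
  refine ⟨![v0, v2, v4, v1, v3], ?_, ![p1, p3, p0, p2, p4], ?_, ?_⟩
  · exact inj5 hv20.symm hv40.symm hv01 hv30.symm hv42.symm hv21 hv32.symm hv41 hv43 hv31.symm
  · exact inj5 hp31.symm hp1p0 hp2p1.symm hp41.symm hp30 hp3p2 hp4p3.symm
      hp20.symm hp40.symm hp42.symm
  · intro i
    have c0 : cedge ![v0, v2, v4, v1, v3] 0 = {v3, v0} := by
      have e : (0 : Fin 5) - 1 = 4 := rfl
      unfold cedge
      rw [e]
      simp
    have c1 : cedge ![v0, v2, v4, v1, v3] 1 = {v0, v2} := by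
      have e : (1 : Fin 5) - 1 = 0 := rfl
      unfold cedge
      rw [e]
      simp
    have c2 : cedge ![v0, v2, v4, v1, v3] 2 = {v2, v4} := by
      have e : (2 : Fin 5) - 1 = 1 := rfl
      unfold cedge
      rw [e]
      simp
    have c3 : cedge ![v0, v2, v4, v1, v3] 3 = {v4, v1} := by
      have e : (3 : Fin 5) - 1 = 2 := rfl
      unfold cedge
      rw [e]
      simp
    have c4 : cedge ![v0, v2, v4, v1, v3] 4 = {v1, v3} := by
      have e : (4 : Fin 5) - 1 = 3 := rfl
      unfold cedge
      rw [e]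
      simp
    fin_cases i
    · refine ⟨by simpa using hp1P, ?_⟩
      show Disjoint (![p1, p3, p0, p2, p4] 0) (cedge ![v0, v2, v4, v1, v3] 0)
      rw [show (![p1, p3, p0, p2, p4] : Fin 5 → Finset (Fin 5)) 0 = p1 by simp, c0, hp1e]
      exact pair_disjoint hv31.symm hv01.symm hv32.symm hv20
    · refine ⟨by simpa using hp3P, ?_⟩
      show Disjoint (![p1, p3, p0, p2, p4] 1) (cedge ![v0, v2, v4, v1, v3] 1)
      rw [show (![p1, p3, p0, p2, p4] : Fin 5 → Finset (Fin 5)) 1 = p3 by simp, c1, hp3e]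
      exact pair_disjoint hv30 hv32 hv40 hv42
    · refine ⟨by simpa using hp0P, ?_⟩
      show Disjoint (![p1, p3, p0, p2, p4] 2) (cedge ![v0, v2, v4, v1, v3] 2)
      rw [show (![p1, p3, p0, p2, p4] : Fin 5 → Finset (Fin 5)) 2 = p0 by simp, c2, hp0e]
      exact pair_disjoint hv20.symm hv40.symm hv21.symm hv41.symm
    · refine ⟨by simpa using hp2P, ?_⟩
      show Disjoint (![p1, p3, p0, p2, p4] 3) (cedge ![v0, v2, v4, v1, v3] 3)
      rw [show (![p1, p3, p0, p2, p4] : Fin 5 → Finset (Fin 5)) 3 = p2 by simp, c3, hp2e]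
      exact pair_disjoint hv42.symm hv21 hv43.symm hv31
    · refine ⟨by simpa using hp4P, ?_⟩
      show Disjoint (![p1, p3, p0, p2, p4] 4) (cedge ![v0, v2, v4, v1, v3] 4)
      rw [show (![p1, p3, p0, p2, p4] : Fin 5 → Finset (Fin 5)) 4 = p4 by simp, c4, hp4e]
      exact pair_disjoint hv41 hv43 hv01 hv30.symm

/-- main theorem, pair form -/
lemma mainP (hn : 5 ≤ n) (P : Finset (Finset (Fin n))) (hP2 : ∀ p ∈ P, p.card = 2)
    (hm : n ≤ P.card) :
    (∃ σ : Fin n → Fin n, Function.Injective σ ∧ ∃ f : Fin n → Finset (Fin n),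
      Function.Injective f ∧ ∀ i, f i ∈ P ∧ Disjoint (f i) (cedge σ i)) ∨
    (∃ (w : Fin n) (pbar : Finset (Fin n)), w ∉ pbar ∧ pbar.card = 2 ∧
      P = insert pbar ((univ.erase w).image (fun x => ({w, x} : Finset (Fin n))))) := by
  classical
  by_cases hbig : ∃ w : Fin n, P.card ≤ (P.filter (fun p => w ∈ p)).card + 2
  · obtain ⟨w, hw⟩ := hbig
    by_cases hQ : (P.filter (fun p => w ∉ p)).card ≤ 1
    · exact Or.inr ⟨w, exceptional hn P hP2 hm hQ⟩
    · exact Or.inl (caseI hn P hP2 hm hw (by omega))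
  · push_neg at hbig
    have hdeg : ∀ y : Fin n, (P.filter (fun p => y ∈ p)).card + 3 ≤ P.card := by
      intro y
      have := hbig y
      omega
    by_cases hm6 : 6 ≤ P.card
    · exact Or.inl (caseII hn P hP2 hm hm6 hdeg)
    · have hm5 : P.card = 5 := by omega
      have hn5 : n = 5 := by omega
      have hsum := handshake P hP2
      have hdeg2 : ∀ x : Fin n, (P.filter (fun p => x ∈ p)).card = 2 := by
        intro x
        by_contra hne
        have hx2 : (P.filter (fun p => x ∈ p)).card < 2 := by
          have := hdeg x
          omega
        have hlt : ∑ y : Fin n, (P.filter (fun p => y ∈ p)).card < ∑ _y : Fin n, 2 := by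
          apply Finset.sum_lt_sum (fun y _ => by have := hdeg y; omega : ∀ y ∈ univ,
            (P.filter (fun p => y ∈ p)).card ≤ 2)
          exact ⟨x, mem_univ x, hx2⟩
        rw [hsum, Finset.sum_const, card_univ, Fintype.card_fin, smul_eq_mul] at hlt
        omega
      exact Or.inl (pentagon hn5 P hP2 hm5 hdeg2)

end BergeAux

theorem stmt_2 {n : ℕ} (hn : 5 ≤ n)
    (H : Finset (Finset (Fin n))) (hH : Uniform (n - 2) H)
    (hcard : n ≤ H.card) :
    HamBergeCycle H ∨ IsKPlusE (n - 2) H := by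
  classical
  haveI : NeZero n := ⟨by omega⟩
  set P := H.image (·ᶜ) with hPdef
  have hPcard : P.card = H.card := Finset.card_image_of_injective H compl_injective
  have hP2 : ∀ p ∈ P, p.card = 2 := by
    intro p hp
    rw [hPdef, Finset.mem_image] at hp
    obtain ⟨e, he, rfl⟩ := hp
    rw [Finset.card_compl, hH e he, Fintype.card_fin]
    omega
  rcases BergeAux.mainP hn P hP2 (by omega) with ⟨σ, hσ, f, hf, hff⟩ |
      ⟨w, pbar, hwp, hpb2, hPe⟩
  · left
    exact BergeAux.build_cycle hn H σ hσ f hf (fun i => hPdef ▸ (hff i).1)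
      (fun i => (hff i).2)
  · right
    refine ⟨w, pbarᶜ, Finset.mem_compl.mpr hwp, ?_, ?_⟩
    · rw [Finset.card_compl, hpb2, Fintype.card_fin]
    · have hH2 : P.image (·ᶜ) = H := by
        rw [hPdef, Finset.image_image]
        have hcc : ((·ᶜ) ∘ (·ᶜ) : Finset (Fin n) → Finset (Fin n)) = id :=
          funext fun q => compl_compl q
        rw [hcc, Finset.image_id]
      rw [← hH2, hPe, Finset.image_insert]
      congr 1
      rw [Finset.image_image]
      apply Finset.Subset.antisymm
      · intro q hq
        rw [Finset.mem_image] at hq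
        obtain ⟨x, hx, rfl⟩ := hq
        rw [Finset.mem_erase] at hx
        rw [Finset.mem_powersetCard]
        constructor
        · intro y hy
          simp only [Function.comp_apply, Finset.mem_compl, Finset.mem_insert,
            Finset.mem_singleton, not_or] at hy
          rw [Finset.mem_erase]
          exact ⟨hy.1, Finset.mem_univ _⟩
        · simp only [Function.comp_apply]
          rw [Finset.card_compl, Finset.card_pair (Ne.symm hx.1), Fintype.card_fin]
      · intro q hq
        rw [Finset.mem_powersetCard] at hq
        obtain ⟨hqsub, hqcard⟩ := hq
        have hwq : w ∉ q := fun h => (Finset.mem_erase.mp (hqsub h)).1 rfl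
        have hqc : qᶜ.card = 2 := by
          rw [Finset.card_compl, hqcard, Fintype.card_fin]
          omega
        have hwqc : w ∈ qᶜ := Finset.mem_compl.mpr hwq
        obtain ⟨x, hxw, hqe⟩ := BergeAux.pair_other hqc hwqc
        rw [Finset.mem_image]
        refine ⟨x, ?_, ?_⟩
        · rw [Finset.mem_erase]
          exact ⟨hxw, Finset.mem_univ _⟩
        · simp only [Function.comp_apply]
          rw [← hqe, compl_compl]
end

section
/- Let r ≥ 3 and n ≥ r+2 be integers, and let H be an r-uniform hypergraph on n vertices with m edges. If λ(H) ≥ C(n-2, r-1) and the Bai–Lu bound λ(H) ≤ p_{r-1}(p_r^{-1}(m) - 1) holds, then m ≥ C(n-1, r). -/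
open Finset

lemma pr_nat (k N : ℕ) (h : k ≤ N) : pr k (N : ℝ) = N.choose k := by
  unfold pr
  have h1 : ∀ i ∈ Finset.range k, ((N : ℝ) - i) = ((N - i : ℕ) : ℝ) := by
    intro i hi
    have : i ≤ N := le_trans (Nat.le_of_lt (Finset.mem_range.1 hi)) h
    rw [Nat.cast_sub this]
  rw [Finset.prod_congr rfl h1, ← Nat.cast_prod, ← Nat.descFactorial_eq_prod_range,
    Nat.descFactorial_eq_factorial_mul_choose]
  have hk : (Nat.factorial k : ℝ) ≠ 0 := by positivity
  push_cast
  field_simp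

lemma le_choose_add (m r : ℕ) (hr : 1 ≤ r) : m + 1 ≤ (m + r).choose r := by
  induction r with
  | zero => omega
  | succ k ih =>
    rcases Nat.eq_zero_or_pos k with hk | hk
    · subst hk; simp [Nat.choose_one_right]
    · have h1 := ih hk
      have h2 : (m + (k + 1)).choose (k + 1) = (m + k).choose k + (m + k).choose (k + 1) := by
        have : m + (k + 1) = (m + k) + 1 := by omega
        rw [this, Nat.choose_succ_succ]
      omega

lemma pr_strictMonoOn (k : ℕ) (hk : 1 ≤ k) :
    StrictMonoOn (pr k) (Set.Ici ((k : ℝ) - 1)) := by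
  intro x hx y hy hxy
  have hx' : (k : ℝ) - 1 ≤ x := hx
  have hfac : (0 : ℝ) < (Nat.factorial k : ℝ) := by positivity
  have hyi : ∀ i ∈ Finset.range k, (0 : ℝ) < y - i := by
    intro i hi
    have : (i : ℝ) ≤ (k : ℝ) - 1 := by
      have := Finset.mem_range.1 hi
      have : (i : ℝ) + 1 ≤ (k : ℝ) := by exact_mod_cast this
      linarith
    linarith [lt_of_le_of_lt hx' hxy]
  have hprod : (∏ i ∈ Finset.range k, (x - i)) < ∏ i ∈ Finset.range k, (y - i) := by
    rcases eq_or_lt_of_le hx' with heq | hlt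
    · have hmem : k - 1 ∈ Finset.range k := Finset.mem_range.2 (by omega)
      have hz : (∏ i ∈ Finset.range k, (x - i)) = 0 := by
        apply Finset.prod_eq_zero hmem
        rw [← heq]
        have : ((k - 1 : ℕ) : ℝ) = (k : ℝ) - 1 := by
          rw [Nat.cast_sub hk]; norm_num
        rw [this]; ring
      rw [hz]
      exact Finset.prod_pos hyi
    · apply Finset.prod_lt_prod_of_nonempty
      · intro i hi
        have : (i : ℝ) ≤ (k : ℝ) - 1 := by
          have := Finset.mem_range.1 hi
          have : (i : ℝ) + 1 ≤ (k : ℝ) := by exact_mod_cast this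
          linarith
        linarith
      · intro i _; linarith
      · exact Finset.nonempty_range_iff.2 (by omega)
  unfold pr
  exact div_lt_div_of_pos_right hprod hfac

theorem stmt_6 {n r m : ℕ} (hr : 3 ≤ r) (hn : r + 2 ≤ n)
    (H : Finset (Finset (Fin n))) (hH : Uniform r H) (hm : H.card = m)
    (hspec : ((n - 2).choose (r - 1) : ℝ) ≤ specRad r H)
    (hBaiLu : specRad r H ≤ pr (r - 1) (prInv r m - 1)) :
    (n - 1).choose r ≤ m := by
  -- basic casts
  have hr1 : (1:ℕ) ≤ r := by omega
  have hfac : (0 : ℝ) < (Nat.factorial r : ℝ) := by positivity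
  -- m is in the image of pr r on Ici (r-1)
  have h0 : pr r ((r : ℝ) - 1) = 0 := by
    unfold pr
    rw [Finset.prod_eq_zero (Finset.mem_range.2 (show r - 1 < r by omega))]
    · simp
    · rw [Nat.cast_sub hr1]; push_cast; ring
  have hb : (m : ℝ) ≤ pr r ((m + r : ℕ) : ℝ) := by
    rw [pr_nat r (m + r) (by omega)]
    have := le_choose_add m r (by omega)
    exact_mod_cast (by omega : m ≤ (m + r).choose r)
  have hcont : ContinuousOn (pr r) (Set.Icc ((r:ℝ)-1) ((m + r : ℕ) : ℝ)) := by
    apply Continuous.continuousOn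
    unfold pr
    exact (continuous_finset_prod _ (fun i _ => by continuity)).div_const _
  have hmem : (m : ℝ) ∈ pr r '' Set.Ici ((r : ℝ) - 1) := by
    have hle : ((r:ℝ) - 1) ≤ ((m + r : ℕ) : ℝ) := by push_cast; linarith
    have := intermediate_value_Icc hle hcont
    have hmIcc : (m : ℝ) ∈ Set.Icc (pr r ((r:ℝ)-1)) (pr r ((m + r : ℕ) : ℝ)) := by
      constructor
      · rw [h0]; positivity
      · exact hb
    obtain ⟨t, htIcc, htval⟩ := this hmIcc
    exact ⟨t, htIcc.1, htval⟩
  obtain ⟨t0, ht0S, ht0val⟩ := hmem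
  have hex : ∃ a ∈ Set.Ici ((r:ℝ)-1), pr r a = (m : ℝ) := ⟨t0, ht0S, ht0val⟩
  set t := prInv r (m : ℝ) with htdef
  have htS : t ∈ Set.Ici ((r:ℝ)-1) := Function.invFunOn_mem hex
  have htval : pr r t = (m : ℝ) := Function.invFunOn_eq hex
  -- chain the inequalities
  have hchain : pr (r-1) (((n-2 : ℕ) : ℝ)) ≤ pr (r-1) (t - 1) := by
    rw [pr_nat (r-1) (n-2) (by omega)]
    exact le_trans hspec hBaiLu
  have hsm := pr_strictMonoOn (r-1) (by omega)
  have hcast : ((r - 1 : ℕ) : ℝ) = (r : ℝ) - 1 := by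
    rw [Nat.cast_sub hr1]; norm_num
  have hn2S : ((n-2:ℕ):ℝ) ∈ Set.Ici (((r-1:ℕ):ℝ) - 1) := by
    rw [hcast]
    have : ((r:ℕ):ℝ) ≤ ((n-2:ℕ):ℝ) := by exact_mod_cast (by omega : r ≤ n - 2)
    simp only [Set.mem_Ici]; linarith
  have ht1S : t - 1 ∈ Set.Ici (((r-1:ℕ):ℝ) - 1) := by
    rw [hcast]
    have := htS
    simp only [Set.mem_Ici] at this ⊢
    linarith
  have hle : ((n-2:ℕ):ℝ) ≤ t - 1 := (hsm.le_iff_le hn2S ht1S).1 hchain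
  -- so t ≥ n - 1
  have hn1cast : ((n-1:ℕ):ℝ) = ((n-2:ℕ):ℝ) + 1 := by
    have : (n - 1 : ℕ) = (n - 2) + 1 := by omega
    rw [this]; push_cast; ring
  have htge : ((n-1:ℕ):ℝ) ≤ t := by rw [hn1cast]; linarith
  have hsmr := pr_strictMonoOn r hr1
  have hn1S : ((n-1:ℕ):ℝ) ∈ Set.Ici ((r:ℝ)-1) := by
    have : ((r:ℕ):ℝ) ≤ ((n-1:ℕ):ℝ) := by exact_mod_cast (by omega : r ≤ n - 1)
    simp only [Set.mem_Ici]; linarith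
  have hfin : pr r ((n-1:ℕ):ℝ) ≤ pr r t :=
    hsmr.monotoneOn hn1S htS htge
  rw [pr_nat r (n-1) (by omega), htval] at hfin
  exact_mod_cast hfin
end

section
/- Let r ≥ 3 and n ≥ r+2. The hypergraph K_{n-1}^r + e (the complete r-graph on n-1 vertices plus one additional edge containing the remaining vertex) contains a Hamiltonian Berge path but does not contain a Hamiltonian Berge cycle. -/
open Finset

lemma cycInt (m r s t : ℕ) (hr : 0 < r) (hrm : r < m) (hs : s < m) (ht : t < m)
    (h : ∀ k < r, (s + (m - t) + k) % m < r) : s = t := by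
  set d := (s + (m - t)) % m with hd
  have hdm : d < m := Nat.mod_lt _ (by omega)
  have h' : ∀ k < r, (d + k) % m < r := by
    intro k hk
    have := Nat.mod_add_mod (s + (m - t)) m k
    rw [← hd] at this
    rw [this]
    exact h k hk
  have hd0 : d = 0 := by
    by_contra hd0
    rcases Nat.lt_or_ge d r with hlt | hge
    · have := h' (r - d) (by omega)
      have e1 : d + (r - d) = r := by omega
      rw [e1, Nat.mod_eq_of_lt hrm] at this
      omega
    · have := h' 0 (by omega)
      rw [Nat.add_zero, Nat.mod_eq_of_lt hdm] at this
      omega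
  -- d = 0 means s + (m - t) = m
  rcases Nat.lt_or_ge (s + (m - t)) m with hlt | hge
  · rw [Nat.mod_eq_of_lt hlt] at hd
    omega
  · have e2 : (s + (m - t)) % m = (s + (m - t) - m) % m := Nat.mod_eq_sub_mod hge
    rw [e2, Nat.mod_eq_of_lt (by omega)] at hd
    omega

theorem stmt_13 {n r : ℕ} (hr : 3 ≤ r) (hn : r + 2 ≤ n)
    (H : Finset (Finset (Fin n))) (hH : IsKPlusE r H) :
    HamBergePath H ∧ ¬ HamBergeCycle H := by
  obtain ⟨w, f, hwf, hfcard, rfl⟩ := hH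
  have hNuniv : (Finset.univ : Finset (Fin n)).card = n := by simp
  have hn5 : 5 ≤ n := by omega
  constructor
  · -- Hamiltonian Berge path
    have hune : (f.erase w).Nonempty := by
      rw [← Finset.card_pos, Finset.card_erase_of_mem hwf, hfcard]; omega
    obtain ⟨u, hu⟩ := hune
    have huw : u ≠ w := (Finset.mem_erase.mp hu).1
    have huf : u ∈ f := (Finset.mem_erase.mp hu).2
    set T : Finset (Fin n) := (Finset.univ.erase w).erase u with hT
    set L : List (Fin n) := w :: u :: T.toList with hL
    have hwT : w ∉ T := by simp [hT]
    have huT : u ∉ T := by simp [hT]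
    have hTcard : T.card = n - 2 := by
      rw [hT, Finset.card_erase_of_mem (Finset.mem_erase.mpr ⟨huw, Finset.mem_univ u⟩),
        Finset.card_erase_of_mem (Finset.mem_univ w), hNuniv]
      omega
    have hLlen : L.length = n := by
      simp [hL, Finset.length_toList, hTcard]; omega
    have hTlen : T.toList.length = n - 2 := by rw [Finset.length_toList, hTcard]
    have hLnd : L.Nodup := by
      refine List.nodup_cons.mpr ⟨?_, List.nodup_cons.mpr ⟨?_, Finset.nodup_toList T⟩⟩
      · simp [huw.symm, hwT]
      · simp [huT]
    set v : ℕ → Fin n := fun i => L.getD i w with hv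
    have hvinj : Set.InjOn v (Set.Iio n) := by
      intro a ha b hb hab
      simp only [Set.mem_Iio] at ha hb
      rw [hv] at hab
      simp only at hab
      rw [show L.getD a w = L[a]'(by omega) from List.getD_eq_getElem L w (by omega),
        show L.getD b w = L[b]'(by omega) from List.getD_eq_getElem L w (by omega)] at hab
      exact hLnd.getElem_inj_iff.mp hab
    have hv0 : v 0 = w := rfl
    have hv1 : v 1 = u := rfl
    have hcov : ∀ x : Fin n, ∃ i < n, v i = x := by
      intro x
      by_cases hxw : x = w
      · exact ⟨0, by omega, by rw [hv0, hxw]⟩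
      by_cases hxu : x = u
      · exact ⟨1, by omega, by rw [hv1, hxu]⟩
      have hxT : x ∈ T.toList := by
        rw [Finset.mem_toList, hT]
        exact Finset.mem_erase.mpr ⟨hxu, Finset.mem_erase.mpr ⟨hxw, Finset.mem_univ x⟩⟩
      obtain ⟨i, hi, hix⟩ := List.mem_iff_getElem.mp hxT
      refine ⟨i + 2, ?_, ?_⟩
      · have := T.length_toList; omega
      · rw [hv]
        simp only
        rw [List.getD_eq_getElem L w (by omega)]
        simp [hL]
        exact hix
    set m := n - 1 with hm
    have hrm : r < m := by omega
    have htailne : ∀ j < m, v (1 + j) ≠ w := by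
      intro j hj hc
      have := hvinj (Set.mem_Iio.mpr (show 1 + j < n by omega)) (Set.mem_Iio.mpr (show 0 < n by omega)) (by rw [hc, hv0])
      omega
    have htailinj : ∀ j < m, ∀ j' < m, v (1 + j) = v (1 + j') → j = j' := by
      intro j hj j' hj' hc
      have := hvinj (Set.mem_Iio.mpr (show 1 + j < n by omega)) (Set.mem_Iio.mpr (show 1 + j' < n by omega)) hc
      omega
    set e : ℕ → Finset (Fin n) :=
      fun i => if i = 0 then f else (Finset.range r).image (fun k => v (1 + (i - 1 + k) % m)) with he
    refine ⟨w, v (n - 1), v, e, hv0, by rw [hNuniv], ?_, fun i _ => Finset.mem_univ _, ?_, ?_, ?_, ?_⟩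
    · rw [hNuniv]; exact hvinj
    · rw [hNuniv]; intro x _; exact hcov x
    · -- injectivity of e on Iio (n - 1)
      rw [hNuniv]
      intro a ha b hb hab
      simp only [Set.mem_Iio] at ha hb
      have hnew : ∀ c < n - 1, c ≠ 0 → w ∉ e c := by
        intro c hc hc0 hwc
        rw [he] at hwc
        simp only [if_neg hc0, Finset.mem_image, Finset.mem_range] at hwc
        obtain ⟨k, hk, hkw⟩ := hwc
        exact htailne _ (Nat.mod_lt _ (by omega)) hkw
      rcases Nat.eq_zero_or_pos a with ha0 | ha0
      · rcases Nat.eq_zero_or_pos b with hb0 | hb0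
        · omega
        · exfalso
          apply hnew b hb (by omega)
          rw [← hab, ha0, he]
          simpa using hwf
      · rcases Nat.eq_zero_or_pos b with hb0 | hb0
        · exfalso
          apply hnew a ha (by omega)
          rw [hab, hb0, he]
          simpa using hwf
        · have hs : a - 1 < m := by omega
          have ht : b - 1 < m := by omega
          have key : a - 1 = b - 1 := by
            apply cycInt m r (a-1) (b-1) (by omega) hrm hs ht
            intro k hk
            have hmem : v (1 + (a - 1 + k) % m) ∈ e a := by
              rw [he]; simp only [if_neg (by omega : a ≠ 0)]
              exact Finset.mem_image.mpr ⟨k, Finset.mem_range.mpr hk, rfl⟩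
            rw [hab, he] at hmem
            simp only [if_neg (by omega : b ≠ 0), Finset.mem_image, Finset.mem_range] at hmem
            obtain ⟨k', hk', hkk'⟩ := hmem
            have heq : (b - 1 + k') % m = (a - 1 + k) % m :=
              htailinj _ (Nat.mod_lt _ (by omega)) _ (Nat.mod_lt _ (by omega)) hkk'
            have e3 : b - 1 + k' + (m - (b - 1)) = k' + m := by omega
            calc (a - 1 + (m - (b - 1)) + k) % m
                = ((a - 1 + k) + (m - (b - 1))) % m := by ring_nf
              _ = ((a - 1 + k) % m + (m - (b - 1))) % m := (Nat.mod_add_mod _ _ _).symm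
              _ = ((b - 1 + k') % m + (m - (b - 1))) % m := by rw [heq]
              _ = (b - 1 + k' + (m - (b - 1))) % m := Nat.mod_add_mod _ _ _
              _ = (k' + m) % m := by rw [e3]
              _ = k' % m := Nat.add_mod_right k' m
              _ = k' := Nat.mod_eq_of_lt (by omega)
              _ < r := hk'
          omega
    · -- e i ∈ H
      rw [hNuniv]
      intro i hi
      rw [he]
      rcases Nat.eq_zero_or_pos i with hi0 | hi0
      · simp [hi0]
      · simp only [if_neg (by omega : i ≠ 0)]
        apply Finset.mem_insert_of_mem
        rw [Finset.mem_powersetCard]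
        constructor
        · intro x hx
          obtain ⟨k, hk, hkx⟩ := Finset.mem_image.mp hx
          exact Finset.mem_erase.mpr ⟨by rw [← hkx]; exact htailne _ (Nat.mod_lt _ (by omega)), Finset.mem_univ x⟩
        · rw [Finset.card_image_of_injOn, Finset.card_range]
          intro k hk k' hk' hkk'
          simp only [Finset.coe_range, Set.mem_Iio, Finset.mem_coe, Finset.mem_range] at hk hk'
          have heq : (i - 1 + k) % m = (i - 1 + k') % m :=
            htailinj _ (Nat.mod_lt _ (by omega)) _ (Nat.mod_lt _ (by omega)) hkk'
          have : k % m = k' % m := Nat.ModEq.add_left_cancel' (i - 1) heq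
          rw [Nat.mod_eq_of_lt (by omega), Nat.mod_eq_of_lt (by omega)] at this
          exact this
    · -- incidences
      rw [hNuniv]
      intro i hi
      rcases Nat.eq_zero_or_pos i with hi0 | hi0
      · subst hi0
        constructor
        · rw [hv0, he]; simpa using hwf
        · rw [hv1, he]; simpa using huf
      · constructor
        · rw [he]
          simp only [if_neg (by omega : i ≠ 0)]
          apply Finset.mem_image.mpr
          refine ⟨0, Finset.mem_range.mpr (by omega), ?_⟩
          rw [Nat.add_zero, Nat.mod_eq_of_lt (by omega : i - 1 < m)]
          congr 1
          omega
        · rw [he]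
          simp only [if_neg (by omega : i ≠ 0)]
          apply Finset.mem_image.mpr
          refine ⟨1, Finset.mem_range.mpr (by omega), ?_⟩
          have e4 : i - 1 + 1 = i := by omega
          rw [e4, Nat.mod_eq_of_lt (by omega : i < m)]
          congr 1
          omega
  · -- no Hamiltonian Berge cycle
    rintro ⟨v, e, hvinj, hvmem, hcov, heinj, heH, hinc⟩
    rw [hNuniv] at hvinj hvmem hcov heinj heH hinc
    obtain ⟨i, hi, hvi⟩ := hcov w (Finset.mem_univ w)
    have hw_only : ∀ g, g ∈ insert f ((Finset.univ.erase w).powersetCard r) → w ∈ g → g = f := by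
      intro g hg hwg
      rcases Finset.mem_insert.mp hg with h | h
      · exact h
      · exfalso
        have := (Finset.mem_powersetCard.mp h).1 hwg
        simp at this
    have h1 : e i = f := hw_only _ (heH i hi) (by rw [← hvi] at hwf ⊢; exact (hinc i hi).1)
    have h2 : e ((i + 1) % n) = f :=
      hw_only _ (heH _ (Nat.mod_lt _ (by omega))) (by rw [← hvi]; exact (hinc i hi).2)
    have heq : i = (i + 1) % n :=
      heinj (Set.mem_Iio.mpr hi) (Set.mem_Iio.mpr (Nat.mod_lt _ (by omega))) (h1.trans h2.symm)
    rcases Nat.lt_or_ge (i + 1) n with h | h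
    · rw [Nat.mod_eq_of_lt h] at heq; omega
    · have h3 : i + 1 = n := by omega
      rw [h3, Nat.mod_self] at heq
      omega
end
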